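/- arXiv:1907.09803 — 10 statements merged into one kernel-verified Lean document; each statement's English description precedes it below -/
import Mathlib

section
/- Let H be as in the context (a real vector space with a symmetric bilinear form φ of signature (p,·)). For any two p-dimensional subspaces V and W of H on which φ is positive definite, and any bases x = (x₁,…,xₚ) of V and y = (y₁,…,yₚ) of W, the Gram-type determinant G(x,y) = det(φ(xᵢ,yⱼ))_{1≤i,j≤p} is nonzero. -/
/-- Let `H` be a real vector space with a symmetric bilinear form `φ`
which splits as an orthogonal direct sum `H = H₊ ⊕ H₋` with `φ` positive definite on the
`p`-dimensional `H₊` and negative definite on `H₋`.  For any two `p`-dimensional subspaces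
`V`, `W` on which `φ` is positive definite and any bases `x` of `V` and `y` of `W`, the Gram
determinant `det (φ (xᵢ) (yⱼ))` is nonzero. -/
theorem stmt_0 {H : Type*} [AddCommGroup H] [Module ℝ H]
    (φ : LinearMap.BilinForm ℝ H) (hφsymm : ∀ u v, φ u v = φ v u)
    (p : ℕ) (hp : 1 ≤ p)
    (Hplus Hminus : Submodule ℝ H) (hcompl : IsCompl Hplus Hminus)
    (horth : ∀ u ∈ Hplus, ∀ v ∈ Hminus, φ u v = 0)
    (hposdef : ∀ u ∈ Hplus, u ≠ 0 → 0 < φ u u)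
    (hplusdim : Module.finrank ℝ Hplus = p)
    (hnegdef : ∀ v ∈ Hminus, v ≠ 0 → φ v v < 0)
    (V W : Submodule ℝ H)
    (hVdim : Module.finrank ℝ V = p) (hWdim : Module.finrank ℝ W = p)
    (hVpos : ∀ v ∈ V, v ≠ 0 → 0 < φ v v)
    (hWpos : ∀ w ∈ W, w ≠ 0 → 0 < φ w w)
    (x y : Fin p → H)
    (hxli : LinearIndependent ℝ x) (hxspan : Submodule.span ℝ (Set.range x) = V)
    (hyli : LinearIndependent ℝ y) (hyspan : Submodule.span ℝ (Set.range y) = W) :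
    Matrix.det (Matrix.of fun i j => φ (x i) (y j)) ≠ 0 := by
  intro hdet
  obtain ⟨c, hc0, hc⟩ := Matrix.exists_vecMul_eq_zero_iff.mpr hdet
  set v : H := ∑ i, c i • x i with hv
  have hv0 : v ≠ 0 := by
    intro h
    exact hc0 (Fintype.linearIndependent_iff.mp hxli c h |> funext)
  have hvV : v ∈ V := by
    rw [← hxspan]
    exact Submodule.sum_mem _ fun i _ =>
      Submodule.smul_mem _ _ (Submodule.subset_span ⟨i, rfl⟩)
  have hvy : ∀ j, φ v (y j) = 0 := by
    intro j
    have := congrFun hc j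
    simpa [Matrix.vecMul, dotProduct, hv, map_sum] using this
  have hvW : ∀ w ∈ W, φ v w = 0 := by
    intro w hw
    rw [← hyspan] at hw
    induction hw using Submodule.span_induction with
    | mem w hw => obtain ⟨j, rfl⟩ := hw; exact hvy j
    | zero => simp
    | add a b _ _ ha hb => simp [ha, hb]
    | smul t a _ ha => simp [ha]
  have hvv : 0 < φ v v := hVpos v hvV hv0
  -- the family y extended by v
  set z : Fin (p + 1) → H := Fin.snoc y v with hz
  have : FiniteDimensional ℝ Hplus := FiniteDimensional.of_finrank_pos (by omega)
  set π := Hplus.linearProjOfIsCompl Hminus hcompl with hπ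
  have hli : LinearIndependent ℝ (fun i => π (z i)) := by
    rw [Fintype.linearIndependent_iff]
    intro g hg
    set w : H := ∑ i : Fin p, g i.castSucc • y i with hwdef
    have hwW : w ∈ W := by
      rw [← hyspan]
      exact Submodule.sum_mem _ fun i _ =>
        Submodule.smul_mem _ _ (Submodule.subset_span ⟨i, rfl⟩)
    set t : ℝ := g (Fin.last p) with ht
    set u : H := ∑ i, g i • z i with hu
    have huwt : u = w + t • v := by
      rw [hu, Fin.sum_univ_castSucc]
      simp [hz, hwdef, ht]
    have hπu : π u = 0 := by
      rw [hu, map_sum]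
      simpa using hg
    have huM : u ∈ Hminus := (Submodule.linearProjOfIsCompl_apply_eq_zero_iff hcompl).mp hπu
    have huu_le : φ u u ≤ 0 := by
      rcases eq_or_ne u 0 with h | h
      · simp [h]
      · exact (hnegdef u huM h).le
    have hww : 0 ≤ φ w w := by
      rcases eq_or_ne w 0 with h | h
      · simp [h]
      · exact (hWpos w hwW h).le
    have hvw : φ v w = 0 := hvW w hwW
    have hwv : φ w v = 0 := by rw [hφsymm]; exact hvw
    have huu : φ u u = φ w w + t ^ 2 * φ v v := by
      rw [huwt]
      simp [map_add, map_smul, hvw, hwv, smul_eq_mul]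
      ring
    have hsum : φ w w + t ^ 2 * φ v v ≤ 0 := huu ▸ huu_le
    have htv : 0 ≤ t ^ 2 * φ v v := by positivity
    have hww0 : φ w w = 0 := by linarith
    have htv0 : t ^ 2 * φ v v = 0 := by linarith
    have ht0 : t = 0 := by
      have h2 : t ^ 2 = 0 := by
        rcases mul_eq_zero.mp htv0 with h | h
        · exact h
        · exact absurd h hvv.ne'
      exact pow_eq_zero_iff two_ne_zero |>.mp h2
    have hw0 : w = 0 := by
      by_contra h
      have := hWpos w hwW h
      linarith
    rw [hwdef] at hw0
    have hcoef : ∀ i : Fin p, g i.castSucc = 0 :=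
      Fintype.linearIndependent_iff.mp hyli _ hw0
    intro i
    induction i using Fin.lastCases with
    | last => exact ht0
    | cast i => exact hcoef i
  have hcard := hli.fintype_card_le_finrank
  rw [hplusdim, Fintype.card_fin] at hcard
  omega
end

section
/- Let H be as in the context (a real vector space with a symmetric bilinear form φ of signature (p,·)). Let x, y, z be p-tuples of vectors of H, each of which is a basis of a p-dimensional subspace on which φ is positive definite. If G(x,y) > 0 and G(x,z) > 0, then G(y,z) > 0. -/
/-!
Let `P` be the projection onto `Hplus` along `Hminus`. A family is positive when every nonzero
combination of it is `φ`-positive. For a positive family `x`, the segment from `P ∘ x` to `x`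
consists of positive families, because moving along `Hminus` only adds `t² φ(q, q) ≤ 0`. The Gram
determinant of two positive `p`-families never vanishes: a nonzero combination of one that is
orthogonal to the other would give `p + 1` positive vectors, while `P` is injective on positive
vectors. By the intermediate value theorem, `sign G(x, y) = sign G(P x, P y)`.

Now `P ∘ x` is a basis of `Hplus`, so `P ∘ y = T_y (P ∘ x)` for a matrix `T_y`, and
`G(P x, P y) = G(P x, P x) T_yᵀ` with `G(P x, P x)` positive definite. Hence
`sign G(x, y) = sign det T_y`, and `sign G(y, z) = sign det T_y · sign det T_z`.
-/

open Matrix Set Submodule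

lemma sign_eq_sign_of_ne_zero_on_Icc {f : ℝ → ℝ} {a b : ℝ} (hab : a ≤ b)
    (hf : ContinuousOn f (Icc a b)) (h0 : ∀ t ∈ Icc a b, f t ≠ 0) :
    SignType.sign (f a) = SignType.sign (f b) := by
  have hzero : (0 : ℝ) ∉ f '' Icc a b := fun ⟨t, ht, hft⟩ => h0 t ht hft
  rcases (h0 a ⟨le_rfl, hab⟩).lt_or_gt with ha | ha <;>
    rcases (h0 b ⟨hab, le_rfl⟩).lt_or_gt with hb | hb
  · rw [sign_neg ha, sign_neg hb]
  · exact absurd (intermediate_value_Icc hab hf ⟨ha.le, hb.le⟩) hzero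
  · exact absurd (intermediate_value_Icc' hab hf ⟨hb.le, ha.le⟩) hzero
  · rw [sign_pos ha, sign_pos hb]

namespace LinearMap.BilinForm

variable {H : Type*} [AddCommGroup H] [Module ℝ H] {φ : LinearMap.BilinForm ℝ H} {ι κ ν : Type*}

variable (φ) in
def gram (x : ι → H) (y : κ → H) : Matrix ι κ ℝ := .of fun i j => φ (x i) (y j)

lemma gram_transpose (hφ : ∀ u v, φ u v = φ v u) (x : ι → H) (y : κ → H) :
    (φ.gram x y)ᵀ = φ.gram y x := by
  ext i j
  exact hφ _ _

lemma det_gram_comm [Fintype ι] [DecidableEq ι] (hφ : ∀ u v, φ u v = φ v u) (x y : ι → H) :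
    (φ.gram x y).det = (φ.gram y x).det := by
  rw [← det_transpose, gram_transpose hφ]

variable [Fintype ι]

lemma vecMul_gram (c : ι → ℝ) (x : ι → H) (y : κ → H) :
    c ᵥ* φ.gram x y = fun j => φ (∑ i, c i • x i) (y j) := by
  ext j
  simp [vecMul, dotProduct, gram, map_sum]

lemma gram_sum_smul_left (T : Matrix ν ι ℝ) (x : ι → H) (y : κ → H) :
    φ.gram (fun i => ∑ k, T i k • x k) y = T * φ.gram x y := by
  ext i j
  simp [gram, mul_apply, map_sum]

lemma gram_sum_smul_right (x : κ → H) (T : Matrix ν ι ℝ) (y : ι → H) :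
    φ.gram x (fun j => ∑ l, T j l • y l) = φ.gram x y * Tᵀ := by
  ext i j
  simp [gram, mul_apply, map_sum, mul_comm]

lemma apply_add_le_apply_add_smul (hφ : ∀ u v, φ u v = φ v u) {a q : H} (haq : φ a q = 0)
    (hq : φ q q ≤ 0) {t : ℝ} (ht : t ∈ Icc (0 : ℝ) 1) :
    φ (a + q) (a + q) ≤ φ (a + t • q) (a + t • q) := by
  have hexpand (s : ℝ) : φ (a + s • q) (a + s • q) = φ a a + s * s * φ q q := by
    simp only [map_add, map_smul, LinearMap.add_apply, LinearMap.smul_apply, smul_eq_mul, haq,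
      hφ q a]
    ring
  have h1 := hexpand 1
  rw [one_smul, one_mul, one_mul] at h1
  rw [h1, hexpand]
  have htt : t * t ≤ 1 := mul_le_one₀ ht.2 ht.1 ht.2
  linarith [mul_le_mul_of_nonpos_right htt hq]

variable (φ) in
def IsPositiveFamily (x : ι → H) : Prop :=
  ∀ c : ι → ℝ, c ≠ 0 → 0 < φ (∑ i, c i • x i) (∑ i, c i • x i)

lemma isPositiveFamily_of_linearIndependent {x : ι → H} (hli : LinearIndependent ℝ x)
    (hpos : ∀ v ∈ span ℝ (Set.range x), v ≠ 0 → 0 < φ v v) : φ.IsPositiveFamily x := by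
  intro c hc
  refine hpos _ (sum_mem fun i _ => smul_mem _ _ (subset_span (Set.mem_range_self i))) fun h0 => ?_
  exact hc (funext (Fintype.linearIndependent_iff.mp hli c h0))

namespace IsPositiveFamily

lemma comp_linearMap {x : ι → H} (hx : φ.IsPositiveFamily x) (f : H →ₗ[ℝ] H)
    (hf : ∀ v, 0 < φ v v → 0 < φ (f v) (f v)) : φ.IsPositiveFamily fun i => f (x i) := by
  intro c hc
  simpa [map_sum] using hf _ (hx c hc)

lemma posDef_gram [DecidableEq ι] (hφ : ∀ u v, φ u v = φ v u) {x : ι → H}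
    (hx : φ.IsPositiveFamily x) : (φ.gram x x).PosDef := by
  refine posDef_iff_dotProduct_mulVec.mpr ⟨gram_transpose hφ x x, fun c hc => ?_⟩
  rw [dotProduct_mulVec, star_trivial, vecMul_gram]
  simpa [dotProduct, map_sum, mul_comm] using hx c hc

lemma option_elim (hφ : ∀ u v, φ u v = φ v u) {x : ι → H} (hx : φ.IsPositiveFamily x) {u : H}
    (hu : 0 < φ u u) (hux : ∀ i, φ u (x i) = 0) :
    φ.IsPositiveFamily fun o : Option ι => o.elim u x := by
  intro c hc
  set w := ∑ i, c (some i) • x i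
  have huw : φ u w = 0 := by simp [w, map_sum, hux]
  have hsplit : φ (c none • u + w) (c none • u + w) = c none * c none * φ u u + φ w w := by
    simp only [map_add, map_smul, LinearMap.add_apply, LinearMap.smul_apply, smul_eq_mul,
      hφ w u, huw]
    ring
  have hw : 0 ≤ φ w w := by
    by_cases hc' : (fun i => c (some i)) = 0
    · simp [w, show ∀ i, c (some i) = 0 from congrFun hc']
    · exact (hx _ hc').le
  simp only [Fintype.sum_option, Option.elim_none, Option.elim_some]
  rw [hsplit]
  by_cases hnone : c none = 0
  · have hc' : (fun i => c (some i)) ≠ 0 := fun h => hc (funext fun o => by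
      cases o with
      | none => exact hnone
      | some i => exact congrFun h i)
    rw [hnone, mul_zero, zero_mul, zero_add]
    exact hx _ hc'
  · have := mul_pos (mul_self_pos.mpr hnone) hu
    linarith

variable {Hplus Hminus : Submodule ℝ H}

lemma linearIndependent_projection (hcompl : IsCompl Hplus Hminus)
    (hneg : ∀ v ∈ Hminus, φ v v ≤ 0) {x : ι → H} (hx : φ.IsPositiveFamily x) :
    LinearIndependent ℝ fun i => Hplus.projection Hminus hcompl (x i) := by
  rw [Fintype.linearIndependent_iff]
  intro c hc i
  by_contra hci
  have hmem : ∑ i, c i • x i ∈ Hminus :=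
    (projection_apply_eq_zero_iff hcompl).mp (by simpa [map_sum] using hc)
  exact (hneg _ hmem).not_gt (hx c fun h0 => hci (congrFun h0 i))

lemma card_le_finrank [FiniteDimensional ℝ Hplus] (hcompl : IsCompl Hplus Hminus)
    (hneg : ∀ v ∈ Hminus, φ v v ≤ 0) {x : ι → H} (hx : φ.IsPositiveFamily x) :
    Fintype.card ι ≤ Module.finrank ℝ Hplus := by
  rw [← finrank_span_eq_card (hx.linearIndependent_projection hcompl hneg)]
  exact Submodule.finrank_mono
    (span_le.mpr (Set.range_subset_iff.mpr fun i => projection_apply_mem hcompl (x i)))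

lemma span_projection_eq [FiniteDimensional ℝ Hplus] (hcompl : IsCompl Hplus Hminus)
    (hneg : ∀ v ∈ Hminus, φ v v ≤ 0) (hcard : Fintype.card ι = Module.finrank ℝ Hplus)
    {x : ι → H} (hx : φ.IsPositiveFamily x) :
    span ℝ (Set.range fun i => Hplus.projection Hminus hcompl (x i)) = Hplus :=
  eq_of_le_of_finrank_eq
    (span_le.mpr (Set.range_subset_iff.mpr fun i => projection_apply_mem hcompl (x i)))
    (by rw [finrank_span_eq_card (hx.linearIndependent_projection hcompl hneg), hcard])

lemma exists_projection_eq_sum [FiniteDimensional ℝ Hplus] (hcompl : IsCompl Hplus Hminus)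
    (hneg : ∀ v ∈ Hminus, φ v v ≤ 0) (hcard : Fintype.card ι = Module.finrank ℝ Hplus)
    {x : ι → H} (hx : φ.IsPositiveFamily x) (y : κ → H) : ∃ T : Matrix κ ι ℝ,
      (fun j => Hplus.projection Hminus hcompl (y j)) =
        fun j => ∑ k, T j k • Hplus.projection Hminus hcompl (x k) := by
  have hmem j : Hplus.projection Hminus hcompl (y j) ∈
      span ℝ (Set.range fun i => Hplus.projection Hminus hcompl (x i)) := by
    rw [hx.span_projection_eq hcompl hneg hcard]
    exact projection_apply_mem hcompl (y j)
  choose T hT using fun j => (mem_span_range_iff_exists_fun ℝ).mp (hmem j)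
  exact ⟨T, funext fun j => (hT j).symm⟩

/-- A nonzero combination of `x` orthogonal to all of `y` would extend `y` to a positive family
that is too large. -/
lemma det_gram_ne_zero [DecidableEq ι] [FiniteDimensional ℝ Hplus] (hφ : ∀ u v, φ u v = φ v u)
    (hcompl : IsCompl Hplus Hminus) (hneg : ∀ v ∈ Hminus, φ v v ≤ 0)
    (hcard : Fintype.card ι = Module.finrank ℝ Hplus) {x y : ι → H}
    (hx : φ.IsPositiveFamily x) (hy : φ.IsPositiveFamily y) :
    (φ.gram x y).det ≠ 0 := by
  intro hdet
  obtain ⟨c, hc, hcy⟩ := exists_vecMul_eq_zero_iff.mpr hdet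
  rw [vecMul_gram] at hcy
  have hlarge := (hy.option_elim hφ (hx c hc) (congrFun hcy)).card_le_finrank hcompl hneg
  rw [Fintype.card_option, hcard] at hlarge
  omega

lemma sign_det_gram_eq_of_segment [DecidableEq ι] [FiniteDimensional ℝ Hplus]
    (hφ : ∀ u v, φ u v = φ v u) (hcompl : IsCompl Hplus Hminus)
    (hneg : ∀ v ∈ Hminus, φ v v ≤ 0) (hcard : Fintype.card ι = Module.finrank ℝ Hplus)
    {u v y : ι → H}
    (hseg : ∀ t ∈ Icc (0 : ℝ) 1, φ.IsPositiveFamily (u + t • (v - u)))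
    (hy : φ.IsPositiveFamily y) :
    SignType.sign (φ.gram u y).det = SignType.sign (φ.gram v y).det := by
  have hgram (t : ℝ) : φ.gram (u + t • (v - u)) y = φ.gram u y + t • φ.gram (v - u) y := by
    ext i j
    simp [gram]
  have hcont : Continuous fun t : ℝ => (φ.gram (u + t • (v - u)) y).det := by
    simp_rw [hgram]
    fun_prop
  simpa using sign_eq_sign_of_ne_zero_on_Icc zero_le_one hcont.continuousOn
    fun t ht => (hseg t ht).det_gram_ne_zero hφ hcompl hneg hcard hy

lemma projection_segment (hφ : ∀ u v, φ u v = φ v u) (hcompl : IsCompl Hplus Hminus)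
    (horth : ∀ u ∈ Hplus, ∀ v ∈ Hminus, φ u v = 0) (hneg : ∀ v ∈ Hminus, φ v v ≤ 0)
    {x : ι → H} (hx : φ.IsPositiveFamily x) :
    ∀ t ∈ Icc (0 : ℝ) 1, φ.IsPositiveFamily
      ((fun i => Hplus.projection Hminus hcompl (x i)) +
        t • (x - fun i => Hplus.projection Hminus hcompl (x i))) := by
  intro t ht
  set P := Hplus.projection Hminus hcompl
  have hPv (v : H) : φ v v ≤ φ (P v + t • (v - P v)) (P v + t • (v - P v)) := by
    have hmem := sub_projection_mem hcompl v
    simpa using apply_add_le_apply_add_smul hφ (horth _ (projection_apply_mem hcompl v) _ hmem)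
      (hneg _ hmem) ht
  convert hx.comp_linearMap (P + t • (LinearMap.id - P)) fun v hv =>
    hv.trans_le (by simpa using hPv v) using 1
  funext i
  simp

lemma projection (hφ : ∀ u v, φ u v = φ v u) (hcompl : IsCompl Hplus Hminus)
    (horth : ∀ u ∈ Hplus, ∀ v ∈ Hminus, φ u v = 0) (hneg : ∀ v ∈ Hminus, φ v v ≤ 0)
    {x : ι → H} (hx : φ.IsPositiveFamily x) :
    φ.IsPositiveFamily fun i => Hplus.projection Hminus hcompl (x i) := by
  simpa using hx.projection_segment hφ hcompl horth hneg 0 ⟨le_rfl, zero_le_one⟩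

lemma sign_det_gram_projection [DecidableEq ι] [FiniteDimensional ℝ Hplus]
    (hφ : ∀ u v, φ u v = φ v u) (hcompl : IsCompl Hplus Hminus)
    (horth : ∀ u ∈ Hplus, ∀ v ∈ Hminus, φ u v = 0) (hneg : ∀ v ∈ Hminus, φ v v ≤ 0)
    (hcard : Fintype.card ι = Module.finrank ℝ Hplus) {x y : ι → H}
    (hx : φ.IsPositiveFamily x) (hy : φ.IsPositiveFamily y) :
    SignType.sign (φ.gram x y).det =
      SignType.sign (φ.gram (fun i => Hplus.projection Hminus hcompl (x i))
        (fun j => Hplus.projection Hminus hcompl (y j))).det := by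
  set P := Hplus.projection Hminus hcompl
  calc SignType.sign (φ.gram x y).det
      = SignType.sign (φ.gram (fun i => P (x i)) y).det :=
        (sign_det_gram_eq_of_segment hφ hcompl hneg hcard
          (hx.projection_segment hφ hcompl horth hneg) hy).symm
    _ = SignType.sign (φ.gram y fun i => P (x i)).det := by rw [det_gram_comm hφ]
    _ = SignType.sign (φ.gram (fun j => P (y j)) fun i => P (x i)).det :=
        (sign_det_gram_eq_of_segment hφ hcompl hneg hcard
          (hy.projection_segment hφ hcompl horth hneg) (hx.projection hφ hcompl horth hneg)).symm
    _ = SignType.sign (φ.gram (fun i => P (x i)) fun j => P (y j)).det := by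
        rw [det_gram_comm hφ]

end IsPositiveFamily

end LinearMap.BilinForm

open LinearMap.BilinForm in
theorem stmt_1_general {H : Type*} [AddCommGroup H] [Module ℝ H]
    (φ : LinearMap.BilinForm ℝ H) (hφsymm : ∀ u v, φ u v = φ v u)
    (p : ℕ) (hp : 1 ≤ p)
    (Hplus Hminus : Submodule ℝ H) (hcompl : IsCompl Hplus Hminus)
    (horth : ∀ u ∈ Hplus, ∀ v ∈ Hminus, φ u v = 0)
    (hplusdim : Module.finrank ℝ Hplus = p)
    (hnegdef : ∀ v ∈ Hminus, v ≠ 0 → φ v v < 0)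
    (x y z : Fin p → H)
    (hxli : LinearIndependent ℝ x)
    (hxpos : ∀ v ∈ Submodule.span ℝ (Set.range x), v ≠ 0 → 0 < φ v v)
    (hyli : LinearIndependent ℝ y)
    (hypos : ∀ v ∈ Submodule.span ℝ (Set.range y), v ≠ 0 → 0 < φ v v)
    (hzli : LinearIndependent ℝ z)
    (hzpos : ∀ v ∈ Submodule.span ℝ (Set.range z), v ≠ 0 → 0 < φ v v)
    (hxy : 0 < Matrix.det (Matrix.of fun i j => φ (x i) (y j)))
    (hxz : 0 < Matrix.det (Matrix.of fun i j => φ (x i) (z j))) :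
    0 < Matrix.det (Matrix.of fun i j => φ (y i) (z j)) := by
  have : FiniteDimensional ℝ Hplus := Module.finite_of_finrank_pos (by omega)
  have hneg : ∀ v ∈ Hminus, φ v v ≤ 0 := fun v hv => by
    rcases eq_or_ne v 0 with rfl | hv0
    · simp
    · exact (hnegdef v hv hv0).le
  have hcard : Fintype.card (Fin p) = Module.finrank ℝ Hplus := by rw [Fintype.card_fin, hplusdim]
  have hx := isPositiveFamily_of_linearIndependent hxli hxpos
  have hy := isPositiveFamily_of_linearIndependent hyli hypos
  have hz := isPositiveFamily_of_linearIndependent hzli hzpos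
  have hsign {u v : Fin p → H} (hu : φ.IsPositiveFamily u) (hv : φ.IsPositiveFamily v) :=
    hu.sign_det_gram_projection hφsymm hcompl horth hneg hcard hv
  obtain ⟨Ty, hTy⟩ := hx.exists_projection_eq_sum hcompl hneg hcard y
  obtain ⟨Tz, hTz⟩ := hx.exists_projection_eq_sum hcompl hneg hcard z
  have hg := sign_pos ((hx.projection hφsymm hcompl horth hneg).posDef_gram hφsymm).det_pos
  have hTy_pos : SignType.sign Ty.det = 1 := by
    have h := sign_pos (show 0 < (φ.gram x y).det from hxy)
    rwa [hsign hx hy, hTy, gram_sum_smul_right, det_mul, det_transpose, sign_mul, hg, one_mul] at h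
  have hTz_pos : SignType.sign Tz.det = 1 := by
    have h := sign_pos (show 0 < (φ.gram x z).det from hxz)
    rwa [hsign hx hz, hTz, gram_sum_smul_right, det_mul, det_transpose, sign_mul, hg, one_mul] at h
  show 0 < (φ.gram y z).det
  rw [← sign_eq_one_iff, hsign hy hz, hTy, hTz, gram_sum_smul_left, gram_sum_smul_right, det_mul,
    det_mul, det_transpose, sign_mul, sign_mul, hTy_pos, hg, hTz_pos, one_mul, one_mul]

/-- With `H`, `φ` of signature `(p,·)` as in the context, let `x, y, z` be
`p`-tuples of vectors, each a basis of a `p`-dimensional subspace on which `φ` is positive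
definite.  If `G(x,y) > 0` and `G(x,z) > 0` then `G(y,z) > 0`, where
`G(x,y) = det (φ (xᵢ) (yⱼ))`. -/
theorem stmt_1 {H : Type*} [AddCommGroup H] [Module ℝ H]
    (φ : LinearMap.BilinForm ℝ H) (hφsymm : ∀ u v, φ u v = φ v u)
    (p : ℕ) (hp : 1 ≤ p)
    (Hplus Hminus : Submodule ℝ H) (hcompl : IsCompl Hplus Hminus)
    (horth : ∀ u ∈ Hplus, ∀ v ∈ Hminus, φ u v = 0)
    (hposdef : ∀ u ∈ Hplus, u ≠ 0 → 0 < φ u u)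
    (hplusdim : Module.finrank ℝ Hplus = p)
    (hnegdef : ∀ v ∈ Hminus, v ≠ 0 → φ v v < 0)
    (x y z : Fin p → H)
    (hxli : LinearIndependent ℝ x)
    (hxpos : ∀ v ∈ Submodule.span ℝ (Set.range x), v ≠ 0 → 0 < φ v v)
    (hyli : LinearIndependent ℝ y)
    (hypos : ∀ v ∈ Submodule.span ℝ (Set.range y), v ≠ 0 → 0 < φ v v)
    (hzli : LinearIndependent ℝ z)
    (hzpos : ∀ v ∈ Submodule.span ℝ (Set.range z), v ≠ 0 → 0 < φ v v)
    (hxy : 0 < Matrix.det (Matrix.of fun i j => φ (x i) (y j)))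
    (hxz : 0 < Matrix.det (Matrix.of fun i j => φ (x i) (z j))) :
    0 < Matrix.det (Matrix.of fun i j => φ (y i) (z j)) :=
  stmt_1_general φ hφsymm p hp Hplus Hminus hcompl horth hplusdim hnegdef x y z hxli hxpos hyli
    hypos hzli hzpos hxy hxz
end

section
/- Let H be as in the context (a real vector space with a symmetric bilinear form φ of signature (p,·)), and fix a basis x = (x₁,…,xₚ) of H₊. For a linear automorphism g of H preserving φ (i.e. φ(gu,gv) = φ(u,v) for all u,v), write g·x = (g x₁,…,g xₚ) and define or(g) to be the sign of G(g·x, x). Then: (i) or(g) ∈ {−1, +1} for every φ-preserving linear automorphism g; (ii) or(gh) = or(g)·or(h) for all φ-preserving linear automorphisms g, h; and (iii) there exists a φ-preserving linear automorphism g with or(g) = −1 (so the orientation map or is a surjective group homomorphism onto {±1}). -/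
/-!
Write `C(g) : H₊ → H₊` for the compression of `g` to `H₊` along `H₋`. Since `H₊` is
`φ`-orthogonal to `H₋`, `G(g·x, x) = det C(g) · G(x, x)`, and the Gram determinant
`G(x, x)` is positive, so `or(g)` is the sign of `det C(g)`. An isometry `g` maps no nonzero
vector of `H₊` into `H₋` (where `φ` is negative), so `C(g)` is invertible and `or(g) = ±1`.

For multiplicativity, let `π₊ + π₋ = 1` be the projections of the splitting and deform
`C(g ∘ h)` through `C(g ∘ (π₊ + t π₋) ∘ h)`, which is `C(g) ∘ C(h)` at `t = 0`. For
`0 ≤ t ≤ 1` and `0 ≠ v ∈ H₊`, with `w = h v`,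
`φ(π₊w + t π₋w, π₊w + t π₋w) = φ(π₊w, π₊w) + t² φ(π₋w, π₋w) ≥ φ(w, w) = φ(v, v) > 0`,
so each map on the path is again invertible and the sign of the determinant cannot change.
Finally, the `φ`-reflection in `x₁` preserves `φ` and multiplies `G(·, x)` by `-1`.
-/

open Set Function Module
open LinearMap (BilinForm)

theorem Real.sign_mul (a b : ℝ) : Real.sign (a * b) = Real.sign a * Real.sign b := by
  rcases lt_trichotomy a 0 with ha | rfl | ha <;> rcases lt_trichotomy b 0 with hb | rfl | hb <;>
    simp [Real.sign_of_neg, Real.sign_of_pos, *, mul_pos_of_neg_of_neg, mul_neg_of_neg_of_pos,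
      mul_neg_of_pos_of_neg]

theorem IsPreconnected.sign_eq_of_ne_zero {X : Type*} [TopologicalSpace X] {s : Set X}
    (hs : IsPreconnected s) {f : X → ℝ} (hf : ContinuousOn f s) (hf0 : ∀ t ∈ s, f t ≠ 0)
    {a b : X} (ha : a ∈ s) (hb : b ∈ s) : Real.sign (f a) = Real.sign (f b) := by
  have no_sign_change : ∀ {a b}, a ∈ s → b ∈ s → f a < 0 → 0 < f b → False :=
    fun ha hb hfa hfb => by
      obtain ⟨t, ht, hft⟩ := hs.intermediate_value ha hb hf ⟨hfa.le, hfb.le⟩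
      exact hf0 t ht hft
  rcases (hf0 a ha).lt_or_gt with hfa | hfa <;> rcases (hf0 b hb).lt_or_gt with hfb | hfb
  · rw [Real.sign_of_neg hfa, Real.sign_of_neg hfb]
  · exact (no_sign_change ha hb hfa hfb).elim
  · exact (no_sign_change hb ha hfb hfa).elim
  · rw [Real.sign_of_pos hfa, Real.sign_of_pos hfb]

namespace LinearMap

variable {M : Type*} [AddCommGroup M] [Module ℝ M] [FiniteDimensional ℝ M]

theorem det_ne_zero_of_injective {f : M →ₗ[ℝ] M} (hf : Injective f) : LinearMap.det f ≠ 0 :=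
  fun h => det_eq_zero_iff_ker_ne_bot.mp h (ker_eq_bot.mpr hf)

theorem sign_det_add_eq_of_forall_injective (A B : M →ₗ[ℝ] M)
    (h : ∀ t ∈ Icc (0 : ℝ) 1, Injective (A + t • B)) :
    Real.sign (LinearMap.det (A + B)) = Real.sign (LinearMap.det A) := by
  let b := finBasis ℝ M
  have hdet : (fun t : ℝ => LinearMap.det (A + t • B)) =
      fun t => (toMatrix b b A + t • toMatrix b b B).det := by
    ext t
    rw [← det_toMatrix b, map_add, map_smul]
  have hcont : Continuous fun t : ℝ => LinearMap.det (A + t • B) := by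
    rw [hdet]
    fun_prop
  simpa using isPreconnected_Icc.sign_eq_of_ne_zero hcont.continuousOn
    (fun t ht => det_ne_zero_of_injective (h t ht)) (right_mem_Icc.2 zero_le_one)
    (left_mem_Icc.2 zero_le_one)

end LinearMap

theorem LinearIndependent.exists_basis_coe_eq {R M ι : Type*} [Ring R] [AddCommGroup M]
    [Module R M] {P : Submodule R M} {x : ι → M} (hx : LinearIndependent R x)
    (hspan : Submodule.span R (range x) = P) : ∃ b : Basis ι R P, ∀ i, (b i : M) = x i :=
  ⟨(Basis.span hx).map (LinearEquiv.ofEq _ _ hspan), fun i => by simp [Basis.span_apply]⟩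

namespace Submodule

variable {R H : Type*} [Ring R] [AddCommGroup H] [Module R H] {P N : Submodule R H}

noncomputable def compression (hPN : IsCompl P N) (f : H →ₗ[R] H) : P →ₗ[R] P :=
  P.projectionOnto N hPN ∘ₗ f ∘ₗ P.subtype

theorem compression_apply (hPN : IsCompl P N) (f : H →ₗ[R] H) (v : P) :
    compression hPN f v = P.projectionOnto N hPN (f v) :=
  rfl

theorem compression_comp_projection_comp (hPN : IsCompl P N) (g h : H →ₗ[R] H) :
    compression hPN (g ∘ₗ P.projection N hPN ∘ₗ h) = compression hPN g ∘ₗ compression hPN h :=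
  rfl

end Submodule

namespace LinearMap.BilinForm

open Submodule (compression)

theorem det_apply_reflection {R M ι : Type*} [CommRing R] [AddCommGroup M] [Module R M]
    [Fintype ι] [DecidableEq ι] (B : BilinForm R M) {f : Dual R M} (x : ι → M) {i : ι}
    (h : f (x i) = 2) :
    (Matrix.of fun j k => B (reflection h (x j)) (x k)).det =
      -(Matrix.of fun j k => B (x j) (x k)).det := by
  have hfactor : Matrix.of (fun j k => B (reflection h (x j)) (x k)) =
      (1 + Matrix.replicateCol Unit (-(f ∘ x)) * Matrix.replicateRow Unit (Pi.single i (1 : R))) *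
        Matrix.of fun j k => B (x j) (x k) := by
    rw [Matrix.add_mul, Matrix.one_mul, Matrix.mul_assoc]
    ext j k
    simp [reflection_apply, Matrix.mul_apply, Pi.single_apply, sub_eq_add_neg]
  rw [hfactor, Matrix.det_mul, Matrix.det_one_add_replicateCol_mul_replicateRow]
  simp only [dotProduct_neg, single_dotProduct, Function.comp_apply, h, one_mul]
  ring

variable {H : Type*} [AddCommGroup H] [Module ℝ H] {φ : BilinForm ℝ H}
  {P N : Submodule ℝ H} (hPN : IsCompl P N)

theorem compression_injective_of_pos (hneg : ∀ u ∈ N, φ u u ≤ 0) {f : H →ₗ[ℝ] H}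
    (hf : ∀ v ∈ P, v ≠ 0 → 0 < φ (f v) (f v)) : Injective (compression hPN f) := by
  refine (injective_iff_map_eq_zero _).2 fun v hv => ?_
  by_contra hv0
  have hfv : f v ∈ N := (Submodule.projectionOnto_apply_eq_zero_iff hPN).1 hv
  exact (hneg _ hfv).not_gt (hf v v.2 (by simpa using hv0))

theorem of_apply_apply_eq_toMatrix_restrict {ι : Type*} [Fintype ι] [DecidableEq ι] {x : ι → H}
    {b : Basis ι ℝ P} (hb : ∀ i, (b i : H) = x i) :
    Matrix.of (fun i j => φ (x i) (x j)) = toMatrix b (φ.restrict P) := by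
  ext i j
  simp [toMatrix_apply, hb]

section Orthogonal

variable (hφ : ∀ u v, φ u v = φ v u) (horth : ∀ u ∈ P, ∀ v ∈ N, φ u v = 0)
include hφ horth

theorem apply_add_add_of_mem {a u : H} (ha : a ∈ P) (hu : u ∈ N) :
    φ (a + u) (a + u) = φ a a + φ u u := by
  simp [horth a ha u hu, hφ u a]

theorem apply_projection_left (w : H) {u : H} (hu : u ∈ P) :
    φ (P.projection N hPN w) u = φ w u := by
  conv_rhs => rw [← Submodule.projection_add_projection_eq_self hPN w]
  rw [map_add, LinearMap.add_apply, hφ (N.projection P hPN.symm w) u,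
    horth u hu _ (Submodule.projection_apply_mem hPN.symm w), add_zero]

theorem apply_self_le_apply_projection_add_smul (hneg : ∀ u ∈ N, φ u u ≤ 0) (w : H) {t : ℝ}
    (ht : t ^ 2 ≤ 1) :
    φ w w ≤ φ (P.projection N hPN w + t • N.projection P hPN.symm w)
      (P.projection N hPN w + t • N.projection P hPN.symm w) := by
  have hmemP := Submodule.projection_apply_mem hPN w
  have hmemN := Submodule.projection_apply_mem hPN.symm w
  have hnonpos := hneg _ hmemN
  conv_lhs => rw [← Submodule.projection_add_projection_eq_self hPN w]
  rw [apply_add_add_of_mem hφ horth hmemP hmemN,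
    apply_add_add_of_mem hφ horth hmemP (N.smul_mem t hmemN)]
  simp only [map_smul, LinearMap.smul_apply, smul_eq_mul]
  nlinarith

theorem sign_det_compression_comp [FiniteDimensional ℝ P] (hpos : ∀ v ∈ P, v ≠ 0 → 0 < φ v v)
    (hneg : ∀ u ∈ N, φ u u ≤ 0) {g h : H →ₗ[ℝ] H} (hg : φ.IsOrthogonal g)
    (hh : φ.IsOrthogonal h) :
    Real.sign (LinearMap.det (compression hPN (g ∘ₗ h))) =
      Real.sign (LinearMap.det (compression hPN g)) *
        Real.sign (LinearMap.det (compression hPN h)) := by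
  set π := P.projection N hPN
  set ρ := N.projection P hPN.symm
  set C := compression hPN
  have path : ∀ t : ℝ, C (g ∘ₗ (π + t • ρ) ∘ₗ h) = C g ∘ₗ C h + t • C (g ∘ₗ ρ ∘ₗ h) := by
    intro t
    rw [← Submodule.compression_comp_projection_comp]
    ext v
    simp [C, π, Submodule.compression_apply]
  have path_injective : ∀ t ∈ Icc (0 : ℝ) 1, Injective (C g ∘ₗ C h + t • C (g ∘ₗ ρ ∘ₗ h)) := by
    intro t ht
    rw [← path]
    refine compression_injective_of_pos hPN hneg fun v hv hv0 => ?_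
    have ht2 : t ^ 2 ≤ 1 := by nlinarith [ht.1, ht.2]
    calc 0 < φ v v := hpos v hv hv0
      _ = φ (h v) (h v) := (hh v v).symm
      _ ≤ φ (π (h v) + t • ρ (h v)) (π (h v) + t • ρ (h v)) :=
        apply_self_le_apply_projection_add_smul hPN hφ horth hneg (h v) ht2
      _ = _ := (hg _ _).symm
  have path_one : C g ∘ₗ C h + C (g ∘ₗ ρ ∘ₗ h) = C (g ∘ₗ h) := by
    rw [← one_smul ℝ (C (g ∘ₗ ρ ∘ₗ h)), ← path, one_smul,
      Submodule.projection_add_projection_eq_id, LinearMap.id_comp]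
  rw [← path_one, LinearMap.sign_det_add_eq_of_forall_injective _ _ path_injective,
    LinearMap.det_comp, Real.sign_mul]

variable {ι : Type*} [Fintype ι] [DecidableEq ι] {x : ι → H} (hx : LinearIndependent ℝ x)
  (hspan : Submodule.span ℝ (Set.range x) = P)
include hx hspan

omit horth in
theorem det_gram_pos (hpos : ∀ v ∈ P, v ≠ 0 → 0 < φ v v) :
    0 < (Matrix.of fun i j => φ (x i) (x j)).det := by
  obtain ⟨b, hb⟩ := hx.exists_basis_coe_eq hspan
  rw [of_apply_apply_eq_toMatrix_restrict hb]
  refine ((posDef_toQuadraticMap_iff_matrix b _ (isSymm_def.2 fun u v => hφ u v)).1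
    fun v hv => ?_).det_pos
  exact hpos v v.2 (by simpa using hv)

theorem det_apply_eq_det_compression_mul (f : H →ₗ[ℝ] H) :
    (Matrix.of fun i j => φ (f (x i)) (x j)).det =
      LinearMap.det (compression hPN f) * (Matrix.of fun i j => φ (x i) (x j)).det := by
  obtain ⟨b, hb⟩ := hx.exists_basis_coe_eq hspan
  have hxP : ∀ i, x i ∈ P := fun i => hb i ▸ (b i).2
  have hmat : Matrix.of (fun i j => φ (f (x i)) (x j)) =
      toMatrix b ((φ.restrict P).compLeft (compression hPN f)) := by
    ext i j
    simp [toMatrix_apply, hb, Submodule.compression, apply_projection_left hPN hφ horth _ (hxP j)]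
  rw [hmat, toMatrix_compLeft, Matrix.det_mul, Matrix.det_transpose, LinearMap.det_toMatrix,
    of_apply_apply_eq_toMatrix_restrict hb]

theorem sign_det_apply_eq_sign_det_compression (hpos : ∀ v ∈ P, v ≠ 0 → 0 < φ v v)
    (f : H →ₗ[ℝ] H) :
    Real.sign (Matrix.of fun i j => φ (f (x i)) (x j)).det =
      Real.sign (LinearMap.det (compression hPN f)) := by
  rw [det_apply_eq_det_compression_mul hPN hφ horth hx hspan, Real.sign_mul,
    Real.sign_of_pos (det_gram_pos hφ hx hspan hpos), mul_one]

end Orthogonal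

end LinearMap.BilinForm

open LinearMap.BilinForm
open Submodule (compression)

theorem stmt_2_general {H : Type*} [AddCommGroup H] [Module ℝ H]
    (φ : LinearMap.BilinForm ℝ H) (hφsymm : ∀ u v, φ u v = φ v u)
    (p : ℕ) (hp : 1 ≤ p)
    (Hplus Hminus : Submodule ℝ H) (hcompl : IsCompl Hplus Hminus)
    (horth : ∀ u ∈ Hplus, ∀ v ∈ Hminus, φ u v = 0)
    (hposdef : ∀ u ∈ Hplus, u ≠ 0 → 0 < φ u u)
    (hnegdef : ∀ v ∈ Hminus, v ≠ 0 → φ v v < 0)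
    (x : Fin p → H)
    (hxli : LinearIndependent ℝ x)
    (hxspan : Submodule.span ℝ (Set.range x) = Hplus) :
    (∀ g : H ≃ₗ[ℝ] H, (∀ u v, φ (g u) (g v) = φ u v) →
      Real.sign (Matrix.det (Matrix.of fun i j => φ (g (x i)) (x j))) = 1 ∨
      Real.sign (Matrix.det (Matrix.of fun i j => φ (g (x i)) (x j))) = -1) ∧
    (∀ g h : H ≃ₗ[ℝ] H, (∀ u v, φ (g u) (g v) = φ u v) →
      (∀ u v, φ (h u) (h v) = φ u v) →
      Real.sign (Matrix.det (Matrix.of fun i j => φ (g (h (x i))) (x j))) =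
        Real.sign (Matrix.det (Matrix.of fun i j => φ (g (x i)) (x j))) *
        Real.sign (Matrix.det (Matrix.of fun i j => φ (h (x i)) (x j)))) ∧
    (∃ g : H ≃ₗ[ℝ] H, (∀ u v, φ (g u) (g v) = φ u v) ∧
      Real.sign (Matrix.det (Matrix.of fun i j => φ (g (x i)) (x j))) = -1) := by
  have hneg : ∀ v ∈ Hminus, φ v v ≤ 0 := fun v hv => by
    rcases eq_or_ne v 0 with rfl | hv0
    · simp
    · exact (hnegdef v hv hv0).le
  have : FiniteDimensional ℝ Hplus := hxspan ▸ FiniteDimensional.span_of_finite ℝ (finite_range x)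
  have hsign := sign_det_apply_eq_sign_det_compression hcompl hφsymm horth hxli hxspan hposdef
  have hsign_equiv : ∀ g : H ≃ₗ[ℝ] H, Real.sign (Matrix.of fun i j => φ (g (x i)) (x j)).det =
      Real.sign (LinearMap.det (compression hcompl g)) :=
    fun g => hsign g
  refine ⟨fun g hg => ?_, fun g h hg hh => ?_, ?_⟩
  · have hinj : Injective (compression hcompl g) :=
      compression_injective_of_pos hcompl hneg fun v hv hv0 => (hg v v).symm ▸ hposdef v hv hv0
    rw [hsign_equiv g]
    exact (Real.sign_apply_eq_of_ne_zero _ (LinearMap.det_ne_zero_of_injective hinj)).symm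
  · rw [hsign_equiv g, hsign_equiv h,
      ← sign_det_compression_comp hcompl hφsymm horth hposdef hneg (g := g) (h := h) hg hh]
    exact hsign ((g : H →ₗ[ℝ] H) ∘ₗ h)
  · obtain ⟨i⟩ : Nonempty (Fin p) := ⟨⟨0, hp⟩⟩
    have hxi : φ (x i) (x i) ≠ 0 :=
      (hposdef _ (hxspan ▸ Submodule.subset_span (mem_range_self i)) (hxli.ne_zero i)).ne'
    have hrefl : LinearMap.IsReflective φ (x i) := .of_dvd_two φ (isUnit_iff_ne_zero.2 hxi).dvd
    refine ⟨reflection (hrefl.coroot_apply_self φ), hrefl.isOrthogonal_reflection φ ⟨hφsymm⟩, ?_⟩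
    rw [det_apply_reflection, Real.sign_neg,
      Real.sign_of_pos (det_gram_pos hφsymm hxli hxspan hposdef)]

/-- With `H`, `φ` of signature `(p,·)` as in the context and `x` a basis of
`H₊`, define `or(g)` as the sign of `G(g·x, x) = det (φ (g xᵢ) (xⱼ))` for a `φ`-preserving
linear automorphism `g`.  Then (i) `or(g) ∈ {−1,+1}`, (ii) `or(gh) = or(g)·or(h)`, and
(iii) some `φ`-preserving automorphism has `or(g) = −1`; that is, `or` is a surjective
homomorphism onto `{±1}`. -/
theorem stmt_2 {H : Type*} [AddCommGroup H] [Module ℝ H]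
    (φ : LinearMap.BilinForm ℝ H) (hφsymm : ∀ u v, φ u v = φ v u)
    (p : ℕ) (hp : 1 ≤ p)
    (Hplus Hminus : Submodule ℝ H) (hcompl : IsCompl Hplus Hminus)
    (horth : ∀ u ∈ Hplus, ∀ v ∈ Hminus, φ u v = 0)
    (hposdef : ∀ u ∈ Hplus, u ≠ 0 → 0 < φ u u)
    (hplusdim : Module.finrank ℝ Hplus = p)
    (hnegdef : ∀ v ∈ Hminus, v ≠ 0 → φ v v < 0)
    (x : Fin p → H)
    (hxli : LinearIndependent ℝ x)
    (hxspan : Submodule.span ℝ (Set.range x) = Hplus) :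
    (∀ g : H ≃ₗ[ℝ] H, (∀ u v, φ (g u) (g v) = φ u v) →
      Real.sign (Matrix.det (Matrix.of fun i j => φ (g (x i)) (x j))) = 1 ∨
      Real.sign (Matrix.det (Matrix.of fun i j => φ (g (x i)) (x j))) = -1) ∧
    (∀ g h : H ≃ₗ[ℝ] H, (∀ u v, φ (g u) (g v) = φ u v) →
      (∀ u v, φ (h u) (h v) = φ u v) →
      Real.sign (Matrix.det (Matrix.of fun i j => φ (g (h (x i))) (x j))) =
        Real.sign (Matrix.det (Matrix.of fun i j => φ (g (x i)) (x j))) *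
        Real.sign (Matrix.det (Matrix.of fun i j => φ (h (x i)) (x j)))) ∧
    (∃ g : H ≃ₗ[ℝ] H, (∀ u v, φ (g u) (g v) = φ u v) ∧
      Real.sign (Matrix.det (Matrix.of fun i j => φ (g (x i)) (x j))) = -1) :=
  stmt_2_general φ hφsymm p hp Hplus Hminus hcompl horth hposdef hnegdef x hxli hxspan
end

section
/- Let H be as in the context (a real vector space with a symmetric bilinear form φ of signature (p,·)). Let P and P′ be two p-dimensional subspaces of H on which φ is positive definite, with bases x = (x₁,…,xₚ) and x′ = (x′₁,…,x′ₚ) respectively. Then for every linear automorphism g of H preserving φ, the sign of G(g·x, x) equals the sign of G(g·x′, x′); that is, the orientation homomorphism does not depend on the choice of the positive definite p-dimensional subspace and of its basis. -/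
/-!
A `p`-dimensional positive definite subspace meets `H₋` trivially, hence is a complement of
`H₋`. Projecting `x` onto `P′` along `H₋` gives a basis `y` of `P′` with `x - y ∈ H₋`, and every
tuple `(1 - t) x + t y`, `t ∈ [0, 1]`, still spans a positive definite subspace, since
`φ(v, v) = (1 - t) φ(u, u) + t φ(u′, u′) - t (1 - t) φ(u - u′, u - u′)` with `u - u′ ∈ H₋`.
For tuples `a`, `b` spanning positive definite `p`-spaces, `det φ(aᵢ, bⱼ)` cannot vanish: a
kernel vector gives a positive vector of `span b` orthogonal to `span a`, hence a positive
definite subspace of dimension `p + 1`. So the sign of `G(g·Y, Y)` is constant along the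
segment `Y = (1 - t) x + t y`, and passing from `y` to `x′` multiplies `G` by the square of a
change-of-basis determinant.
-/

open Module Submodule Matrix Set

theorem Real.sign_mul_of_pos {r : ℝ} (hr : 0 < r) (a : ℝ) :
    Real.sign (r * a) = Real.sign a := by
  rcases lt_trichotomy a 0 with ha | rfl | ha
  · rw [sign_of_neg ha, sign_of_neg (mul_neg_of_pos_of_neg hr ha)]
  · rw [mul_zero]
  · rw [sign_of_pos ha, sign_of_pos (mul_pos hr ha)]

theorem Real.sign_eq_sign_of_forall_ne_zero {f : ℝ → ℝ} {a b : ℝ} (hab : a ≤ b)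
    (hf : ContinuousOn f (Icc a b)) (hne : ∀ t ∈ Icc a b, f t ≠ 0) :
    Real.sign (f a) = Real.sign (f b) := by
  have hfa := hne a (left_mem_Icc.2 hab)
  have hfb := hne b (right_mem_Icc.2 hab)
  have hzero : (0 : ℝ) ∉ uIcc (f a) (f b) := fun h => by
    obtain ⟨t, ht, hft⟩ := intermediate_value_uIcc (by rwa [uIcc_of_le hab]) h
    exact hne t (by rwa [uIcc_of_le hab] at ht) hft
  rw [mem_uIcc] at hzero
  rcases hfa.lt_or_gt with ha | ha <;> rcases hfb.lt_or_gt with hb | hb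
  · rw [sign_of_neg ha, sign_of_neg hb]
  · exact absurd (Or.inl ⟨ha.le, hb.le⟩) hzero
  · exact absurd (Or.inr ⟨hb.le, ha.le⟩) hzero
  · rw [sign_of_pos ha, sign_of_pos hb]

section Complement

variable {K V : Type*} [Field K] [AddCommGroup V] [Module K V] {S M N : Submodule K V}

theorem Submodule.injective_projectionOnto_comp_subtype (hMN : IsCompl M N)
    (hSN : Disjoint S N) : Function.Injective (M.projectionOnto N hMN ∘ₗ S.subtype) := by
  rwa [← LinearMap.ker_eq_bot, LinearMap.ker_comp, ker_projectionOnto,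
    ← disjoint_iff_comap_eq_bot]

theorem Submodule.finrank_le_of_disjoint (hMN : IsCompl M N) [FiniteDimensional K M]
    (hSN : Disjoint S N) : finrank K S ≤ finrank K M :=
  LinearMap.finrank_le_finrank_of_injective (injective_projectionOnto_comp_subtype hMN hSN)

theorem Submodule.isCompl_of_disjoint_of_finrank_eq (hMN : IsCompl M N) [FiniteDimensional K M]
    (hSN : Disjoint S N) (hS : finrank K S = finrank K M) : IsCompl S N := by
  have hinj := injective_projectionOnto_comp_subtype hMN hSN
  have : FiniteDimensional K S := .of_injective _ hinj
  have hsurj := (LinearMap.injective_iff_surjective_of_finrank_eq_finrank hS).1 hinj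
  refine ⟨hSN, codisjoint_iff.2 (eq_top_iff'.2 fun v => ?_)⟩
  obtain ⟨s, hs⟩ := hsurj (M.projectionOnto N hMN v)
  have hvs : v - s ∈ N := by
    rw [← ker_projectionOnto hMN, LinearMap.mem_ker, map_sub, ← hs, LinearMap.comp_apply,
      subtype_apply, sub_self]
  simpa using add_mem_sup s.2 hvs

theorem LinearIndependent.of_sub_mem {ι : Type*} {x y : ι → V} (hx : LinearIndependent K x)
    (hxN : Disjoint (span K (range x)) N) (hyx : ∀ i, y i - x i ∈ N) :
    LinearIndependent K y := by
  have hmk : N.mkQ ∘ x = N.mkQ ∘ y := funext fun i => (Submodule.Quotient.eq N).2 (by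
    rw [← neg_sub]; exact N.neg_mem (hyx i))
  exact .of_comp N.mkQ (hmk ▸ hx.map (by rwa [ker_mkQ]))

end Complement

namespace LinearMap.BilinForm

variable {H : Type*} [AddCommGroup H] [Module ℝ H] {φ : LinearMap.BilinForm ℝ H}
  {S N M P P' : Submodule ℝ H}

def PosDefOn (φ : LinearMap.BilinForm ℝ H) (S : Submodule ℝ H) : Prop :=
  ∀ v ∈ S, v ≠ 0 → 0 < φ v v

def NegDefOn (φ : LinearMap.BilinForm ℝ H) (S : Submodule ℝ H) : Prop :=
  ∀ v ∈ S, v ≠ 0 → φ v v < 0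

theorem NegDefOn.apply_self_nonpos (hN : φ.NegDefOn N) {v : H} (hv : v ∈ N) : φ v v ≤ 0 := by
  rcases eq_or_ne v 0 with rfl | hv0
  · simp
  · exact (hN v hv hv0).le

theorem PosDefOn.disjoint (hS : φ.PosDefOn S) (hN : φ.NegDefOn N) : Disjoint S N :=
  disjoint_def.2 fun v hvS hvN => by_contra fun hv => (hS v hvS hv).not_gt (hN v hvN hv)

theorem PosDefOn.map (hS : φ.PosDefOn S) {g : H →ₗ[ℝ] H}
    (hg : ∀ u v, φ (g u) (g v) = φ u v) :
    φ.PosDefOn (S.map g) := by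
  rintro _ ⟨v, hv, rfl⟩ hgv
  rw [hg]
  exact hS v hv (by rintro rfl; simp at hgv)

theorem PosDefOn.finrank_le (hS : φ.PosDefOn S) (hMN : IsCompl M N) [FiniteDimensional ℝ M]
    (hN : φ.NegDefOn N) : finrank ℝ S ≤ finrank ℝ M :=
  finrank_le_of_disjoint hMN (hS.disjoint hN)

theorem PosDefOn.isCompl (hS : φ.PosDefOn S) (hMN : IsCompl M N) [FiniteDimensional ℝ M]
    (hN : φ.NegDefOn N) (hSM : finrank ℝ S = finrank ℝ M) : IsCompl S N :=
  isCompl_of_disjoint_of_finrank_eq hMN (hS.disjoint hN) hSM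

theorem PosDefOn.sup_span_singleton (hsymm : ∀ u v, φ u v = φ v u) (hS : φ.PosDefOn S) {v : H}
    (hvS : v ∈ S.orthogonalBilin φ) (hv : 0 < φ v v) : φ.PosDefOn (S ⊔ span ℝ {v}) := by
  intro w hw hw0
  obtain ⟨s, hs, _, hc, rfl⟩ := mem_sup.1 hw
  obtain ⟨c, rfl⟩ := mem_span_singleton.1 hc
  have hsv : φ s v = 0 := hvS s hs
  have hvs : φ v s = 0 := by rw [hsymm, hsv]
  have hexp : φ (s + c • v) (s + c • v) = φ s s + c ^ 2 * φ v v := by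
    simp only [map_add, map_smul, LinearMap.add_apply, LinearMap.smul_apply, smul_eq_mul, hsv, hvs]
    ring
  rw [hexp]
  rcases eq_or_ne s 0 with rfl | hs0
  · have hc0 : c ≠ 0 := by rintro rfl; simp at hw0
    simpa using mul_pos (by positivity : 0 < c ^ 2) hv
  · nlinarith [hS s hs hs0, sq_nonneg c]

theorem PosDefOn.apply_self_nonpos_of_mem_orthogonalBilin (hsymm : ∀ u v, φ u v = φ v u)
    (hMN : IsCompl M N) [FiniteDimensional ℝ M] (hN : φ.NegDefOn N) (hS : φ.PosDefOn S)
    [FiniteDimensional ℝ S] (hSM : finrank ℝ S = finrank ℝ M) {v : H}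
    (hv : v ∈ S.orthogonalBilin φ) : φ v v ≤ 0 := by
  by_contra! hvv
  have hvS : v ∉ S := fun h => (hv v h ▸ hvv).false
  have hlt : S < S ⊔ span ℝ {v} := left_lt_sup.2 fun h => hvS (h (mem_span_singleton_self v))
  have := (hS.sup_span_singleton hsymm hv hvv).finrank_le hMN hN
  have := finrank_lt_finrank_of_lt hlt
  omega

variable {ι : Type*} [Fintype ι]

theorem det_ne_zero_of_posDefOn [DecidableEq ι] (hsymm : ∀ u v, φ u v = φ v u)
    (hMN : IsCompl M N) [FiniteDimensional ℝ M] (hN : φ.NegDefOn N)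
    (hcard : Fintype.card ι = finrank ℝ M) {u w : ι → H} (hu : LinearIndependent ℝ u)
    (hw : LinearIndependent ℝ w) (hupos : φ.PosDefOn (span ℝ (Set.range u)))
    (hwpos : φ.PosDefOn (span ℝ (Set.range w))) :
    (Matrix.of fun i j => φ (u i) (w j)).det ≠ 0 := by
  intro hdet
  obtain ⟨c, hc0, hc⟩ := exists_mulVec_eq_zero_iff.2 hdet
  set v := ∑ j, c j • w j
  have hv0 : v ≠ 0 := fun h => hc0 (funext (Fintype.linearIndependent_iff.1 hw c h))
  have hvw : v ∈ span ℝ (Set.range w) :=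
    sum_smul_mem _ c fun j _ => subset_span (Set.mem_range_self j)
  have hvu : v ∈ (span ℝ (Set.range u)).orthogonalBilin φ := by
    have hle : span ℝ (Set.range u) ≤ LinearMap.ker (φ.flip v) := by
      rw [span_le]
      rintro _ ⟨i, rfl⟩
      simpa [Matrix.mulVec, dotProduct, v, mul_comm] using congrFun hc i
    exact fun s hs => hle hs
  have := FiniteDimensional.span_of_finite ℝ (Set.finite_range u)
  have := hupos.apply_self_nonpos_of_mem_orthogonalBilin hsymm hMN hN
    (by rw [finrank_span_eq_card hu, hcard]) hvu
  exact this.not_gt (hwpos v hvw hv0)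

theorem det_apply_map_ne_zero [DecidableEq ι] (hsymm : ∀ u v, φ u v = φ v u)
    (hMN : IsCompl M N) [FiniteDimensional ℝ M] (hN : φ.NegDefOn N)
    (hcard : Fintype.card ι = finrank ℝ M) {g : H ≃ₗ[ℝ] H}
    (hg : ∀ u v, φ (g u) (g v) = φ u v) {u : ι → H} (hu : LinearIndependent ℝ u)
    (hupos : φ.PosDefOn (span ℝ (Set.range u))) :
    (Matrix.of fun i j => φ (g (u i)) (u j)).det ≠ 0 := by
  refine det_ne_zero_of_posDefOn hsymm hMN hN hcard (hu.map' g.toLinearMap g.ker) hu ?_ hupos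
  rw [show Set.range (fun i => g (u i)) = g.toLinearMap '' Set.range u from Set.range_comp _ _,
    ← Submodule.map_span]
  exact hupos.map hg

theorem apply_self_pos_of_sub_mem (hN : φ.NegDefOn N) (hP : φ.PosDefOn P)
    (hP' : φ.PosDefOn P') {u u' : H} (hu : u ∈ P) (hu' : u' ∈ P') (huu' : u - u' ∈ N)
    {t : ℝ} (ht : t ∈ Icc 0 1) (hv : (1 - t) • u + t • u' ≠ 0) :
    0 < φ ((1 - t) • u + t • u') ((1 - t) • u + t • u') := by
  have hu0 : u ≠ 0 := by
    rintro rfl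
    have hu'N : u' ∈ N := by simpa using N.neg_mem huu'
    simp [disjoint_def.1 (hP'.disjoint hN) u' hu' hu'N] at hv
  have hu'0 : u' ≠ 0 := by
    rintro rfl
    simp [disjoint_def.1 (hP.disjoint hN) u hu (by simpa using huu')] at hv
  have hexp : φ ((1 - t) • u + t • u') ((1 - t) • u + t • u') =
      (1 - t) * φ u u + t * φ u' u' - t * (1 - t) * φ (u - u') (u - u') := by
    simp only [map_add, map_sub, map_smul, LinearMap.add_apply, LinearMap.sub_apply,
      LinearMap.smul_apply, smul_eq_mul]
    ring
  have hconv : 0 < (1 - t) * φ u u + t * φ u' u' := by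
    have := hP u hu hu0
    have := hP' u' hu' hu'0
    rcases eq_or_lt_of_le ht.2 with rfl | ht1
    · simpa
    · nlinarith [ht.1]
  have hdefect := mul_nonpos_of_nonneg_of_nonpos (mul_nonneg ht.1 (sub_nonneg.2 ht.2))
    (hN.apply_self_nonpos huu')
  rw [hexp]
  linarith

theorem posDefOn_span_segment (hN : φ.NegDefOn N) (hP : φ.PosDefOn P) (hP' : φ.PosDefOn P')
    {x y : ι → H} (hx : ∀ i, x i ∈ P) (hy : ∀ i, y i ∈ P') (hxy : ∀ i, x i - y i ∈ N)
    {t : ℝ} (ht : t ∈ Icc 0 1) :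
    φ.PosDefOn (span ℝ (Set.range ((1 - t) • x + t • y))) := by
  intro v hv hv0
  obtain ⟨c, rfl⟩ := (mem_span_range_iff_exists_fun ℝ).1 hv
  have hsplit : ∑ i, c i • ((1 - t) • x + t • y) i =
      (1 - t) • ∑ i, c i • x i + t • ∑ i, c i • y i := by
    simp only [Pi.add_apply, Pi.smul_apply, smul_add, Finset.sum_add_distrib, Finset.smul_sum,
      smul_comm (c _)]
  have hdiff : ∑ i, c i • x i - ∑ i, c i • y i ∈ N := by
    rw [← Finset.sum_sub_distrib]
    simp_rw [← smul_sub]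
    exact sum_smul_mem N c fun i _ => hxy i
  rw [hsplit] at hv0 ⊢
  exact apply_self_pos_of_sub_mem hN hP hP' (sum_smul_mem P c fun i _ => hx i)
    (sum_smul_mem P' c fun i _ => hy i) hdiff ht hv0

theorem gram_sum_smul {κ : Type*} (B : LinearMap.BilinForm ℝ H) (C : Matrix κ ι ℝ)
    (x : ι → H) :
    (Matrix.of fun i j => B (∑ k, C i k • x k) (∑ l, C j l • x l)) =
      C * (Matrix.of fun i j => B (x i) (x j)) * Cᵀ := by
  ext i j
  simp only [of_apply, mul_apply, transpose_apply, map_sum, map_smul, LinearMap.sum_apply,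
    LinearMap.smul_apply, smul_eq_mul, Finset.mul_sum, Finset.sum_mul]
  exact Finset.sum_congr rfl fun k _ => Finset.sum_congr rfl fun l _ => by ring

theorem continuous_det_gram_segment [DecidableEq ι] (B : LinearMap.BilinForm ℝ H)
    (x y : ι → H) :
    Continuous fun t : ℝ =>
      (Matrix.of fun i j => B (((1 - t) • x + t • y) i) (((1 - t) • x + t • y) j)).det := by
  refine Continuous.matrix_det (continuous_matrix fun i j => ?_)
  simp only [of_apply, Pi.add_apply, Pi.smul_apply, map_add, map_smul, LinearMap.add_apply,
    LinearMap.smul_apply, smul_eq_mul]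
  fun_prop

theorem sign_det_gram_eq_of_mem_span [DecidableEq ι] (B : LinearMap.BilinForm ℝ H)
    {x y : ι → H} (hy : LinearIndependent ℝ y) (hyx : ∀ i, y i ∈ span ℝ (Set.range x)) :
    Real.sign (Matrix.of fun i j => B (y i) (y j)).det =
      Real.sign (Matrix.of fun i j => B (x i) (x j)).det := by
  choose C hC using fun i => (mem_span_range_iff_exists_fun ℝ).1 (hyx i)
  have hdet : (Matrix.of C).det ≠ 0 := by
    intro h
    obtain ⟨c, hc0, hc⟩ := exists_vecMul_eq_zero_iff.2 h
    refine hc0 (funext (Fintype.linearIndependent_iff.1 hy c ?_))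
    calc ∑ i, c i • y i = ∑ k, (c ᵥ* Matrix.of C) k • x k := by
          simp only [← hC, vecMul, dotProduct, of_apply, Finset.smul_sum, Finset.sum_smul,
            smul_smul]
          exact Finset.sum_comm
      _ = 0 := by simp [hc]
  have hy' : y = fun i => ∑ k, Matrix.of C i k • x k := funext fun i => (hC i).symm
  rw [hy', gram_sum_smul, det_mul, det_mul, det_transpose, mul_comm, ← mul_assoc, ← sq,
    Real.sign_mul_of_pos (by positivity)]

end LinearMap.BilinForm

open LinearMap.BilinForm

theorem stmt_3_general {H : Type*} [AddCommGroup H] [Module ℝ H]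
    (φ : LinearMap.BilinForm ℝ H) (hφsymm : ∀ u v, φ u v = φ v u)
    (p : ℕ) (hp : 1 ≤ p)
    (Hplus Hminus : Submodule ℝ H) (hcompl : IsCompl Hplus Hminus)
    (hplusdim : Module.finrank ℝ Hplus = p)
    (hnegdef : ∀ v ∈ Hminus, v ≠ 0 → φ v v < 0)
    (P P' : Submodule ℝ H)
    (hPpos : ∀ v ∈ P, v ≠ 0 → 0 < φ v v)
    (hP'pos : ∀ v ∈ P', v ≠ 0 → 0 < φ v v)
    (x x' : Fin p → H)
    (hxli : LinearIndependent ℝ x) (hxspan : Submodule.span ℝ (Set.range x) = P)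
    (hx'li : LinearIndependent ℝ x') (hx'span : Submodule.span ℝ (Set.range x') = P')
    (g : H ≃ₗ[ℝ] H) (hg : ∀ u v, φ (g u) (g v) = φ u v) :
    Real.sign (Matrix.det (Matrix.of fun i j => φ (g (x i)) (x j))) =
      Real.sign (Matrix.det (Matrix.of fun i j => φ (g (x' i)) (x' j))) := by
  have : FiniteDimensional ℝ Hplus := .of_finrank_pos (by omega)
  have hP'compl : IsCompl P' Hminus := PosDefOn.isCompl hP'pos hcompl hnegdef <| by
    rw [← hx'span, finrank_span_eq_card hx'li, Fintype.card_fin, hplusdim]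
  set y : Fin p → H := fun i => P'.projection Hminus hP'compl (x i)
  set Y : ℝ → Fin p → H := fun t => (1 - t) • x + t • y
  have hxy (i : Fin p) : x i - y i ∈ Hminus := sub_projection_mem hP'compl (x i)
  have hYli (t : ℝ) : LinearIndependent ℝ (Y t) :=
    hxli.of_sub_mem (hxspan ▸ PosDefOn.disjoint hPpos hnegdef) fun i => by
      have : Y t i - x i = (-t) • (x i - y i) := by
        simp only [Y, Pi.add_apply, Pi.smul_apply]
        module
      exact this ▸ Hminus.smul_mem _ (hxy i)
  have hYpos (t : ℝ) (ht : t ∈ Icc 0 1) : φ.PosDefOn (span ℝ (range (Y t))) :=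
    posDefOn_span_segment hnegdef hPpos hP'pos (fun i => hxspan ▸ subset_span (mem_range_self i))
      (fun i => projection_apply_mem hP'compl (x i)) hxy ht
  have hY0 : Y 0 = x := by simp [Y]
  have hY1 : Y 1 = y := by simp [Y]
  calc Real.sign (Matrix.of fun i j => φ (g (x i)) (x j)).det
      = Real.sign (Matrix.of fun i j => φ (g (Y 0 i)) (Y 0 j)).det := by rw [hY0]
    _ = Real.sign (Matrix.of fun i j => φ (g (Y 1 i)) (Y 1 j)).det :=
      Real.sign_eq_sign_of_forall_ne_zero zero_le_one
        (continuous_det_gram_segment (φ.compLeft g) x y).continuousOn fun t ht =>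
          det_apply_map_ne_zero hφsymm hcompl hnegdef (by rw [Fintype.card_fin, hplusdim]) hg
            (hYli t) (hYpos t ht)
    _ = Real.sign (Matrix.of fun i j => φ (g (x' i)) (x' j)).det := by
      rw [hY1]
      exact sign_det_gram_eq_of_mem_span (φ.compLeft g) (hY1 ▸ hYli 1)
        fun i => hx'span ▸ projection_apply_mem hP'compl (x i)

/-- With `H`, `φ` of signature `(p,·)` as in the context, let `P`, `P′` be
`p`-dimensional subspaces on which `φ` is positive definite, with respective bases `x`, `x′`.
Then for every `φ`-preserving linear automorphism `g` of `H`, the sign of `G(g·x, x)` equals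
the sign of `G(g·x′, x′)`: the orientation homomorphism does not depend on the choice of the
positive definite `p`-dimensional subspace and of its basis. -/
theorem stmt_3 {H : Type*} [AddCommGroup H] [Module ℝ H]
    (φ : LinearMap.BilinForm ℝ H) (hφsymm : ∀ u v, φ u v = φ v u)
    (p : ℕ) (hp : 1 ≤ p)
    (Hplus Hminus : Submodule ℝ H) (hcompl : IsCompl Hplus Hminus)
    (horth : ∀ u ∈ Hplus, ∀ v ∈ Hminus, φ u v = 0)
    (hposdef : ∀ u ∈ Hplus, u ≠ 0 → 0 < φ u u)
    (hplusdim : Module.finrank ℝ Hplus = p)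
    (hnegdef : ∀ v ∈ Hminus, v ≠ 0 → φ v v < 0)
    (P P' : Submodule ℝ H)
    (hPdim : Module.finrank ℝ P = p) (hP'dim : Module.finrank ℝ P' = p)
    (hPpos : ∀ v ∈ P, v ≠ 0 → 0 < φ v v)
    (hP'pos : ∀ v ∈ P', v ≠ 0 → 0 < φ v v)
    (x x' : Fin p → H)
    (hxli : LinearIndependent ℝ x) (hxspan : Submodule.span ℝ (Set.range x) = P)
    (hx'li : LinearIndependent ℝ x') (hx'span : Submodule.span ℝ (Set.range x') = P')
    (g : H ≃ₗ[ℝ] H) (hg : ∀ u v, φ (g u) (g v) = φ u v) :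
    Real.sign (Matrix.det (Matrix.of fun i j => φ (g (x i)) (x j))) =
      Real.sign (Matrix.det (Matrix.of fun i j => φ (g (x' i)) (x' j))) :=
  stmt_3_general φ hφsymm p hp Hplus Hminus hcompl hplusdim hnegdef P P' hPpos hP'pos x x' hxli
    hxspan hx'li hx'span g hg
end

section
/- Let V, B be as in the context, and let g be a linear automorphism of V preserving B such that g − id has finite rank. If E is a finite-dimensional subspace of V that contains the range of g − id and on which B is nondegenerate, then g maps E onto E, and g fixes every vector of the B-orthogonal complement E^⊥. -/
/-- Let `𝕂` be a field with an involution `σ`, `V` a `𝕂`-vector space and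
`B` a reflexive sesquilinear form on `V`.  Let `g` be a `B`-preserving linear automorphism of
`V` such that `g − id` has finite rank.  If `E` is a finite-dimensional subspace containing
the range of `g − id` on which `B` is nondegenerate, then `g` maps `E` onto `E` and fixes
every vector of the `B`-orthogonal complement `E^⊥`. -/
theorem stmt_4 {𝕂 : Type*} [Field 𝕂] (σ : 𝕂 ≃+* 𝕂) (hσinv : ∀ a, σ (σ a) = a)
    {V : Type*} [AddCommGroup V] [Module 𝕂 V]
    (B : V → V → 𝕂)
    (haddl : ∀ x y z : V, B (x + y) z = B x z + B y z)
    (haddr : ∀ x y z : V, B x (y + z) = B x y + B x z)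
    (hsmull : ∀ (a : 𝕂) (x y : V), B (a • x) y = a * B x y)
    (hsmulr : ∀ (a : 𝕂) (x y : V), B x (a • y) = σ a * B x y)
    (hrefl : ∀ x y : V, B x y = 0 → B y x = 0)
    (g : V ≃ₗ[𝕂] V) (hgB : ∀ x y : V, B (g x) (g y) = B x y)
    (hfr : FiniteDimensional 𝕂 (LinearMap.range (g.toLinearMap - LinearMap.id)))
    (E : Submodule 𝕂 V) (hEfin : FiniteDimensional 𝕂 E)
    (hrange : LinearMap.range (g.toLinearMap - LinearMap.id) ≤ E)
    (hnondeg : ∀ u ∈ E, (∀ v ∈ E, B u v = 0) → u = 0) :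
    Submodule.map g.toLinearMap E = E ∧ ∀ v : V, (∀ e ∈ E, B e v = 0) → g v = v := by
  have hsubset : Submodule.map g.toLinearMap E ≤ E := by
    rintro _ ⟨e, he, rfl⟩
    have h1 : g e - e ∈ E := hrange ⟨e, by simp⟩
    have h2 : g.toLinearMap e = (g e - e) + e := by simp
    rw [h2]
    exact E.add_mem h1 he
  have hmap : Submodule.map g.toLinearMap E = E := by
    apply Submodule.eq_of_le_of_finrank_le hsubset
    have := (Submodule.equivMapOfInjective g.toLinearMap g.injective E).finrank_eq
    omega
  refine ⟨hmap, fun v hv => ?_⟩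
  have hsub : ∀ x y z : V, B x (y - z) = B x y - B x z := by
    intro x y z
    have h1 := haddr x (y - z) z
    rw [sub_add_cancel] at h1
    exact eq_sub_of_add_eq h1.symm
  set w := g v - v with hw
  have hwE : w ∈ E := hrange ⟨v, by simp [hw]⟩
  have hBzero : ∀ u ∈ E, B u w = 0 := by
    intro u hu
    obtain ⟨e, he, rfl⟩ := hmap ▸ hu
    have h1 : B (g e) (g v) = B e v := hgB e v
    have h2 : B e v = 0 := hv e he
    have h3 : B (g.toLinearMap e) v = 0 := hv _ (hsubset ⟨e, he, rfl⟩)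
    show B (g e) w = 0
    rw [hw, hsub, h1, h2]
    simpa using h3
  have hw0 : w = 0 := hnondeg w hwE (fun u hu => hrefl u w (hBzero u hu))
  exact sub_eq_zero.mp hw0
end

section
/- Let H be as in the context (a real vector space with a symmetric bilinear form φ of signature (p,·)). Let g₁,…,gₙ be finitely many linear automorphisms of H preserving φ, each of which is a finite rank perturbation of the identity. Then there exists a finite-dimensional subspace E of H such that: φ restricted to E is nondegenerate of index p (i.e. E contains a p-dimensional subspace on which φ is positive definite, and no subspace of E on which φ is positive definite has dimension greater than p); each gᵢ maps E onto E; and each gᵢ fixes every vector of the φ-orthogonal complement E^⊥. -/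
open Module

/-- Extend a finite-dimensional subspace to a finite-dimensional nondegenerate one,
by induction on the dimension of the radical. -/
private lemma extend_nondeg {H : Type*} [AddCommGroup H] [Module ℝ H]
    (φ : LinearMap.BilinForm ℝ H) (hsymm : ∀ u v, φ u v = φ v u)
    (hnd : ∀ r : H, r ≠ 0 → ∃ w, φ r w ≠ 0) :
    ∀ (k : ℕ) (E : Submodule ℝ H), FiniteDimensional ℝ E →
      Module.finrank ℝ ↥(E ⊓ φ.orthogonal E) ≤ k →
      ∃ E' : Submodule ℝ H, E ≤ E' ∧ FiniteDimensional ℝ E' ∧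
        ∀ u ∈ E', (∀ v ∈ E', φ u v = 0) → u = 0 := by
  have key : ∀ E : Submodule ℝ H, (E ⊓ φ.orthogonal E) = ⊥ →
      ∀ u ∈ E, (∀ v ∈ E, φ u v = 0) → u = 0 := by
    intro E hbot u hu h0
    have : u ∈ E ⊓ φ.orthogonal E := by
      refine Submodule.mem_inf.mpr ⟨hu, LinearMap.BilinForm.mem_orthogonal_iff.mpr ?_⟩
      intro m hm
      show φ m u = 0
      rw [hsymm m u]; exact h0 m hm
    rw [hbot] at this
    simpa using this
  intro k
  induction k with
  | zero =>
    intro E hE hrad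
    have hfd : FiniteDimensional ℝ ↥(E ⊓ φ.orthogonal E) :=
      Submodule.finiteDimensional_of_le inf_le_left
    have hbot : (E ⊓ φ.orthogonal E) = ⊥ :=
      Submodule.finrank_eq_zero.mp (Nat.le_zero.mp hrad)
    exact ⟨E, le_rfl, hE, key E hbot⟩
  | succ k ih =>
    intro E hE hrad
    by_cases hbot : (E ⊓ φ.orthogonal E) = ⊥
    · exact ⟨E, le_rfl, hE, key E hbot⟩
    · obtain ⟨r, hrmem, hr0⟩ := Submodule.exists_mem_ne_zero_of_ne_bot hbot
      obtain ⟨w, hw⟩ := hnd r hr0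
      have hrE : r ∈ E := (Submodule.mem_inf.mp hrmem).1
      have hrorth : ∀ m ∈ E, φ m r = 0 :=
        LinearMap.BilinForm.mem_orthogonal_iff.mp (Submodule.mem_inf.mp hrmem).2
      set E' : Submodule ℝ H := E ⊔ ℝ ∙ w with hE'def
      have hle : E ≤ E' := le_sup_left
      have hwE' : w ∈ E' := Submodule.mem_sup_right (Submodule.mem_span_singleton_self w)
      have hE'fd : FiniteDimensional ℝ E' := Submodule.finiteDimensional_sup _ _
      -- the radical strictly decreases
      have hradle : (E' ⊓ φ.orthogonal E') ≤ (E ⊓ φ.orthogonal E) := by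
        intro u humem
        obtain ⟨huE', huorth⟩ := Submodule.mem_inf.mp humem
        have huorth' : ∀ m ∈ E', φ m u = 0 :=
          LinearMap.BilinForm.mem_orthogonal_iff.mp huorth
        obtain ⟨e, he, z, hz, rfl⟩ := Submodule.mem_sup.mp huE'
        obtain ⟨t, rfl⟩ := Submodule.mem_span_singleton.mp hz
        have hru : φ r (e + t • w) = 0 := huorth' r (hle hrE)
        have hre : φ r e = 0 := (hsymm r e) ▸ hrorth e he
        have ht : t = 0 := by
          rw [map_add, map_smul, hre, smul_eq_mul, zero_add] at hru
          rcases mul_eq_zero.mp hru with h | h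
          · exact h
          · exact absurd h hw
        subst ht
        refine Submodule.mem_inf.mpr ⟨by simpa using he, LinearMap.BilinForm.mem_orthogonal_iff.mpr ?_⟩
        intro m hm
        simpa using huorth' m (hle hm)
      have hradlt : (E' ⊓ φ.orthogonal E') < (E ⊓ φ.orthogonal E) := by
        refine lt_of_le_of_ne hradle ?_
        intro heq
        have : r ∈ E' ⊓ φ.orthogonal E' := heq ▸ hrmem
        have := LinearMap.BilinForm.mem_orthogonal_iff.mp (Submodule.mem_inf.mp this).2 w hwE'
        rw [hsymm] at hw
        exact hw this
      have hfd : FiniteDimensional ℝ ↥(E ⊓ φ.orthogonal E) :=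
        Submodule.finiteDimensional_of_le inf_le_left
      have hlt := Submodule.finrank_lt_finrank_of_lt hradlt
      have hk : Module.finrank ℝ ↥(E' ⊓ φ.orthogonal E') ≤ k := by omega
      obtain ⟨E'', h1, h2, h3⟩ := ih E' hE'fd hk
      exact ⟨E'', hle.trans h1, h2, h3⟩

/-- With `H`, `φ` of signature `(p,·)` as in the context, let `g₁,…,gₙ` be
finitely many `φ`-preserving linear automorphisms of `H`, each a finite rank perturbation of
the identity.  Then there is a finite-dimensional subspace `E` on which `φ` is nondegenerate
of index `p` (it contains a `p`-dimensional positive definite subspace and no positive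
definite subspace of `E` has dimension `> p`), such that each `gᵢ` maps `E` onto `E` and
fixes every vector of `E^⊥`. -/
theorem stmt_5 {H : Type*} [AddCommGroup H] [Module ℝ H]
    (φ : LinearMap.BilinForm ℝ H) (hφsymm : ∀ u v, φ u v = φ v u)
    (p : ℕ) (hp : 1 ≤ p)
    (Hplus Hminus : Submodule ℝ H) (hcompl : IsCompl Hplus Hminus)
    (horth : ∀ u ∈ Hplus, ∀ v ∈ Hminus, φ u v = 0)
    (hposdef : ∀ u ∈ Hplus, u ≠ 0 → 0 < φ u u)
    (hplusdim : Module.finrank ℝ Hplus = p)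
    (hnegdef : ∀ v ∈ Hminus, v ≠ 0 → φ v v < 0)
    (n : ℕ) (g : Fin n → (H ≃ₗ[ℝ] H))
    (hgφ : ∀ i, ∀ u v : H, φ (g i u) (g i v) = φ u v)
    (hgfr : ∀ i, FiniteDimensional ℝ (LinearMap.range ((g i).toLinearMap - LinearMap.id))) :
    ∃ E : Submodule ℝ H, FiniteDimensional ℝ E ∧
      (∀ u ∈ E, (∀ v ∈ E, φ u v = 0) → u = 0) ∧
      (∃ P : Submodule ℝ H, P ≤ E ∧ Module.finrank ℝ P = p ∧
        ∀ v ∈ P, v ≠ 0 → 0 < φ v v) ∧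
      (∀ P : Submodule ℝ H, P ≤ E → (∀ v ∈ P, v ≠ 0 → 0 < φ v v) →
        Module.finrank ℝ P ≤ p) ∧
      (∀ i, Submodule.map (g i).toLinearMap E = E) ∧
      (∀ i, ∀ v : H, (∀ e ∈ E, φ e v = 0) → g i v = v) := by
  classical
  -- φ is nonpositive on Hminus
  have hminle : ∀ v ∈ Hminus, φ v v ≤ 0 := by
    intro v hv
    rcases eq_or_ne v 0 with rfl | h
    · simp
    · exact (hnegdef v hv h).le
  -- φ is nondegenerate on H
  have hnd : ∀ r : H, r ≠ 0 → ∃ w, φ r w ≠ 0 := by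
    intro r hr
    have hmem : r ∈ Hplus ⊔ Hminus := by
      rw [hcompl.sup_eq_top]; trivial
    obtain ⟨u, hu, v, hv, rfl⟩ := Submodule.mem_sup.mp hmem
    have h1 : φ u v = 0 := horth u hu v hv
    have h2 : φ v u = 0 := by rw [hφsymm]; exact h1
    refine ⟨u - v, ?_⟩
    have hexp : φ (u + v) (u - v) = φ u u - φ v v := by
      simp [map_add, map_sub, LinearMap.add_apply, LinearMap.sub_apply, h1, h2]
    rw [hexp]
    rcases eq_or_ne u 0 with rfl | hu0
    · have hv0 : v ≠ 0 := by simpa using hr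
      have := hnegdef v hv hv0
      simp only [map_zero, LinearMap.zero_apply]
      linarith
    · have h3 := hposdef u hu hu0
      have h4 := hminle v hv
      intro hcon
      linarith
  -- the ranges
  set R : Fin n → Submodule ℝ H := fun i => LinearMap.range ((g i).toLinearMap - LinearMap.id)
    with hRdef
  set S : Fin n → Submodule ℝ H := fun i => LinearMap.range ((g i).symm.toLinearMap - LinearMap.id)
    with hSdef
  have hRfd : ∀ i, FiniteDimensional ℝ (R i) := hgfr
  have hSle : ∀ i, S i ≤ Submodule.map (g i).symm.toLinearMap (R i) := by
    rintro i y ⟨x, rfl⟩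
    have hmem : ((((g i).toLinearMap - LinearMap.id : H →ₗ[ℝ] H)) x) ∈ R i :=
      LinearMap.mem_range_self _ x
    refine ⟨_, Submodule.neg_mem _ hmem, ?_⟩
    simp [LinearMap.sub_apply, map_sub, map_neg]
  have hSfd : ∀ i, FiniteDimensional ℝ (S i) := by
    intro i
    haveI := hRfd i
    haveI : FiniteDimensional ℝ (Submodule.map (g i).symm.toLinearMap (R i)) :=
      Module.Finite.map _ _
    exact Submodule.finiteDimensional_of_le (hSle i)
  haveI hplusfd : FiniteDimensional ℝ Hplus :=
    FiniteDimensional.of_finrank_pos (by omega)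
  -- the core subspace
  set F : Submodule ℝ H := Hplus ⊔ ⨆ i, (R i ⊔ S i) with hFdef
  haveI : ∀ i, FiniteDimensional ℝ ↥(R i ⊔ S i) := fun i => by
    haveI := hRfd i; haveI := hSfd i; exact Submodule.finiteDimensional_sup _ _
  haveI hFfd : FiniteDimensional ℝ F := Submodule.finiteDimensional_sup _ _
  have hRF : ∀ i, R i ≤ F := fun i =>
    le_trans (le_trans le_sup_left (le_iSup (fun i => R i ⊔ S i) i)) le_sup_right
  have hSF : ∀ i, S i ≤ F := fun i =>
    le_trans (le_trans le_sup_right (le_iSup (fun i => R i ⊔ S i) i)) le_sup_right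
  -- extend to a nondegenerate finite-dimensional subspace
  obtain ⟨E, hFE, hEfd, hEnd⟩ := extend_nondeg φ hφsymm hnd
    (Module.finrank ℝ ↥(F ⊓ φ.orthogonal F)) F hFfd le_rfl
  have hRE : ∀ i, R i ≤ E := fun i => (hRF i).trans hFE
  have hSE : ∀ i, S i ≤ E := fun i => (hSF i).trans hFE
  have hplusE : Hplus ≤ E := le_trans le_sup_left hFE
  -- g i and its inverse preserve E
  have hgsymmE : ∀ i, ∀ x ∈ E, (g i).symm x ∈ E := by
    intro i x hx
    have hm : (g i).symm x - x ∈ S i :=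
      ⟨x, by simp [LinearMap.sub_apply]⟩
    have h2 := hSE i hm
    have : (g i).symm x = x + ((g i).symm x - x) := by abel
    rw [this]; exact E.add_mem hx h2
  have hgE : ∀ i, ∀ x ∈ E, g i x ∈ E := by
    intro i x hx
    have hm : g i x - x ∈ R i :=
      ⟨x, by simp [LinearMap.sub_apply]⟩
    have h2 := hRE i hm
    have : g i x = x + (g i x - x) := by abel
    rw [this]; exact E.add_mem hx h2
  refine ⟨E, hEfd, hEnd, ⟨Hplus, hplusE, hplusdim, hposdef⟩, ?_, ?_, ?_⟩
  · -- index at most p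
    intro P hPE hPpos
    set f : P →ₗ[ℝ] Hplus :=
      (Submodule.linearProjOfIsCompl Hplus Hminus hcompl).comp P.subtype with hfdef
    have hinj : Function.Injective f := by
      intro x y hxy
      have h0 : f (x - y) = 0 := by rw [map_sub, hxy, sub_self]
      have : ((x - y : P) : H) ∈ Hminus := by
        have := (Submodule.linearProjOfIsCompl_apply_eq_zero_iff hcompl).mp h0
        exact this
      have hle := hminle _ this
      by_contra hne
      have hne' : (x - y : P) ≠ 0 := sub_ne_zero.mpr (fun h => hne (by rw [h]))
      have : ((x - y : P) : H) ≠ 0 := fun h => hne' (Subtype.ext h)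
      have := hPpos _ (x - y).2 this
      linarith
    calc Module.finrank ℝ P ≤ Module.finrank ℝ Hplus :=
          LinearMap.finrank_le_finrank_of_injective hinj
      _ = p := hplusdim
  · -- invariance
    intro i
    apply le_antisymm
    · rintro _ ⟨x, hx, rfl⟩
      exact hgE i x hx
    · intro x hx
      exact ⟨(g i).symm x, hgsymmE i x hx, by simp⟩
  · -- fixes the orthogonal complement
    intro i v hv
    have hdE : g i v - v ∈ E := hRE i ⟨v, by simp [LinearMap.sub_apply]⟩
    have hgv : ∀ e ∈ E, φ e (g i v) = 0 := by
      intro e he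
      have h1 : φ (g i ((g i).symm e)) (g i v) = φ ((g i).symm e) v := hgφ i _ _
      have h2 : g i ((g i).symm e) = e := (g i).apply_symm_apply e
      rw [h2] at h1
      rw [h1]
      exact hv _ (hgsymmE i e he)
    have hd0 : ∀ e ∈ E, φ (g i v - v) e = 0 := by
      intro e he
      rw [hφsymm]
      simp only [map_sub]
      rw [hgv e he, hv e he, sub_zero]
    have := hEnd _ hdE hd0
    have : g i v = v := by
      have h := sub_eq_zero.mp this
      exact h
    exact this
end

section
/- Let V be a vector space over a field 𝕂 and let g be a linear automorphism of V such that g − id has finite rank. If E₁ and E₂ are finite-dimensional g-invariant subspaces of V, each containing the range of g − id, then the determinant of the restriction of g to E₁ equals the determinant of the restriction of g to E₂. (Hence det(g) := det(g|_E) is well defined for finite rank perturbations g of the identity, independently of the choice of such a subspace E.) -/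
/-!
Choose a finite-dimensional invariant subspace `F` containing both `E₁` and `E₂`, e.g. their sum.
For `E ≤ F` invariant and containing the range of `g - id`, the map induced by `g` on `F ⧸ E` is
the identity, so the block-triangular decomposition of `g|_F` gives `det (g|_F) = det (g|_E)`.
-/

namespace Submodule

variable {R M : Type*} [Ring R] [AddCommGroup M] [Module R M]

theorem mapQ_eq_id_of_sub_mem (p : Submodule R M) (f : M →ₗ[R] M) (hf : p ≤ p.comap f)
    (hsub : ∀ x, f x - x ∈ p) : p.mapQ p f hf = LinearMap.id := by
  ext x
  simpa [Submodule.Quotient.eq] using hsub x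

end Submodule

namespace LinearMap

variable {𝕂 V : Type*} [Field 𝕂] [AddCommGroup V] [Module 𝕂 V]

theorem det_eq_det_restrict_of_sub_mem [FiniteDimensional 𝕂 V] (f : V →ₗ[𝕂] V)
    (E : Submodule 𝕂 V) (hinv : ∀ x ∈ E, f x ∈ E) (hsub : ∀ x, f x - x ∈ E) :
    f.det = (f.restrict hinv).det := by
  rw [det_eq_det_mul_det E f hinv, E.mapQ_eq_id_of_sub_mem f hinv hsub, det_id, mul_one]

theorem det_restrict_eq_of_le (g : V →ₗ[𝕂] V) {E F : Submodule 𝕂 V} [FiniteDimensional 𝕂 F]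
    (hEF : E ≤ F) (hinvE : ∀ x ∈ E, g x ∈ E) (hinvF : ∀ x ∈ F, g x ∈ F)
    (hsub : ∀ x, g x - x ∈ E) :
    (g.restrict hinvE).det = (g.restrict hinvF).det := by
  let E' : Submodule 𝕂 F := E.comap F.subtype
  have hinvE' : ∀ x ∈ E', g.restrict hinvF x ∈ E' := fun x hx => hinvE x hx
  let e : E' ≃ₗ[𝕂] E := Submodule.comapSubtypeEquivOfLe hEF
  have hconj : g.restrict hinvE =
      (e : E' →ₗ[𝕂] E) ∘ₗ (g.restrict hinvF).restrict hinvE' ∘ₗ (e.symm : E →ₗ[𝕂] E') := rfl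
  rw [hconj, det_conj, det_eq_det_restrict_of_sub_mem _ E' hinvE' fun x => hsub x]

end LinearMap

theorem stmt_6_general {𝕂 : Type*} [Field 𝕂] {V : Type*} [AddCommGroup V] [Module 𝕂 V]
    (g : V ≃ₗ[𝕂] V)
    (E₁ E₂ : Submodule 𝕂 V)
    (hE₁fin : FiniteDimensional 𝕂 E₁) (hE₂fin : FiniteDimensional 𝕂 E₂)
    (hr₁ : LinearMap.range (g.toLinearMap - LinearMap.id) ≤ E₁)
    (hr₂ : LinearMap.range (g.toLinearMap - LinearMap.id) ≤ E₂)
    (hinv₁ : ∀ x ∈ E₁, g.toLinearMap x ∈ E₁)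
    (hinv₂ : ∀ x ∈ E₂, g.toLinearMap x ∈ E₂) :
    LinearMap.det (g.toLinearMap.restrict hinv₁) =
      LinearMap.det (g.toLinearMap.restrict hinv₂) := by
  have hinv : E₁ ⊔ E₂ ≤ (E₁ ⊔ E₂).comap g.toLinearMap :=
    sup_le (le_trans hinv₁ (Submodule.comap_mono le_sup_left))
      (le_trans hinv₂ (Submodule.comap_mono le_sup_right))
  rw [g.toLinearMap.det_restrict_eq_of_le le_sup_left hinv₁ hinv
      fun x => hr₁ (LinearMap.mem_range_self _ x),
    g.toLinearMap.det_restrict_eq_of_le le_sup_right hinv₂ hinv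
      fun x => hr₂ (LinearMap.mem_range_self _ x)]

/-- Let `V` be a vector space over a field `𝕂` and `g` a linear
automorphism of `V` with `g − id` of finite rank.  If `E₁`, `E₂` are finite-dimensional
`g`-invariant subspaces each containing the range of `g − id`, then the determinants of the
restrictions of `g` to `E₁` and to `E₂` agree: `det g` is well defined for finite rank
perturbations of the identity. -/
theorem stmt_6 {𝕂 : Type*} [Field 𝕂] {V : Type*} [AddCommGroup V] [Module 𝕂 V]
    (g : V ≃ₗ[𝕂] V)
    (hfr : FiniteDimensional 𝕂 (LinearMap.range (g.toLinearMap - LinearMap.id)))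
    (E₁ E₂ : Submodule 𝕂 V)
    (hE₁fin : FiniteDimensional 𝕂 E₁) (hE₂fin : FiniteDimensional 𝕂 E₂)
    (hr₁ : LinearMap.range (g.toLinearMap - LinearMap.id) ≤ E₁)
    (hr₂ : LinearMap.range (g.toLinearMap - LinearMap.id) ≤ E₂)
    (hinv₁ : ∀ x ∈ E₁, g.toLinearMap x ∈ E₁)
    (hinv₂ : ∀ x ∈ E₂, g.toLinearMap x ∈ E₂) :
    LinearMap.det (g.toLinearMap.restrict hinv₁) =
      LinearMap.det (g.toLinearMap.restrict hinv₂) :=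
  stmt_6_general g E₁ E₂ hE₁fin hE₂fin hr₁ hr₂ hinv₁ hinv₂
end

section
/- Let G be a Hausdorff topological group whose center is trivial. If G contains a dense normal subgroup N that is simple as an abstract group, then G is topologically simple: every nontrivial normal subgroup of G is dense in G. -/
/-!
Pick `h ≠ 1` in `H`. Since the center is trivial and centralizers in a Hausdorff group are
closed, `h` cannot commute with the whole dense subgroup `N`; a commutator `⁅h, n⁆ ≠ 1` with
`n ∈ N` then lies in `H ⊓ N`. Hence `H ⊓ N` is a nontrivial normal subgroup of the simple
group `N`, so `N ≤ H`, and `H` is dense because `N` is.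
-/

open scoped commutatorElement

namespace Subgroup

variable {G : Type*} [Group G]

theorem centralizer_eq_center_of_dense [TopologicalSpace G] [ContinuousMul G] [T2Space G]
    {s : Set G} (hs : Dense s) : centralizer s = center G := by
  refine le_antisymm (fun x hx => mem_center_iff.mpr fun g => ?_) (center_le_centralizer _)
  have hsx : s ⊆ Set.centralizer {x} := fun n hn =>
    Set.mem_centralizer_iff.mpr fun y hy => (hy ▸ (mem_centralizer_iff.mp hx n hn).symm)
  have hg : g ∈ Set.centralizer {x} :=
    (Set.isClosed_centralizer _).closure_subset_iff.mpr hsx (hs.closure_eq ▸ Set.mem_univ g)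
  exact (Set.mem_centralizer_iff.mp hg x rfl).symm

theorem inf_ne_bot_of_not_le_centralizer {H N : Subgroup G} [H.Normal] [N.Normal]
    (hHN : ¬H ≤ centralizer (N : Set G)) : H ⊓ N ≠ ⊥ := by
  obtain ⟨h, hh, hhN⟩ : ∃ h ∈ H, h ∉ centralizer (N : Set G) := Set.not_subset.mp hHN
  obtain ⟨n, hn, hnh⟩ : ∃ n ∈ N, n * h ≠ h * n := by
    simpa [mem_centralizer_iff] using hhN
  have hc : ⁅h, n⁆ ∈ H ⊓ N := commutator_le_inf H N (commutator_mem_commutator hh hn)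
  have hc1 : ⁅h, n⁆ ≠ 1 := fun h1 => hnh (commutatorElement_eq_one_iff_mul_comm.mp h1).symm
  exact ne_bot_iff_exists_ne_one.mpr ⟨⟨_, hc⟩, fun h1 => hc1 (congrArg Subtype.val h1)⟩

theorem le_of_inf_ne_bot_of_isSimpleGroup {H N : Subgroup G} [H.Normal] [IsSimpleGroup N]
    (hHN : H ⊓ N ≠ ⊥) : N ≤ H := by
  have hHN' : H.subgroupOf N ≠ ⊥ := by
    rwa [Ne, subgroupOf_eq_bot, disjoint_iff]
  exact subgroupOf_eq_top.mp
    ((normal_subgroupOf (H := N) (N := H)).eq_bot_or_eq_top.resolve_left hHN')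

end Subgroup

/-- Let `G` be a Hausdorff topological group with trivial center.  If `G`
contains a dense normal subgroup `N` that is simple as an abstract group, then `G` is
topologically simple: every nontrivial normal subgroup of `G` is dense in `G`. -/
theorem stmt_9 {G : Type*} [Group G] [TopologicalSpace G] [IsTopologicalGroup G] [T2Space G]
    (hcenter : Subgroup.center G = ⊥)
    (N : Subgroup G) (hNnormal : N.Normal) (hNdense : Dense (N : Set G))
    (hNsimple : IsSimpleGroup N) :
    ∀ H : Subgroup G, H.Normal → H ≠ ⊥ → Dense (H : Set G) := by
  intro H hH hH_ne
  have hH_not_central : ¬H ≤ Subgroup.centralizer (N : Set G) := by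
    rwa [Subgroup.centralizer_eq_center_of_dense hNdense, hcenter, le_bot_iff]
  have hNH : N ≤ H := Subgroup.le_of_inf_ne_bot_of_isSimpleGroup
    (Subgroup.inf_ne_bot_of_not_le_centralizer hH_not_central)
  exact hNdense.mono hNH
end

section
/- Let σ be a ring automorphism of the field ℂ of complex numbers such that σ(λ · conj(λ)) = σ(λ) · conj(σ(λ)) for every λ ∈ ℂ (i.e. σ is compatible with the squared absolute value). Then σ maps ℝ into ℝ, and consequently σ is either the identity of ℂ or complex conjugation. -/
/-!
For real `r` the hypothesis reads `σ r * σ r = σ r * conj (σ r)`, so `σ r` is self-conjugate,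
i.e. real. Hence `σ` restricts to a ring endomorphism of `ℝ`, which must be the identity
(an order-preserving map, since squares go to squares). So `σ` is `ℝ`-linear, and the only
`ℝ`-algebra endomorphisms of `ℂ` are the identity and conjugation.
-/

open ComplexConjugate

namespace Complex

theorem exists_ofReal_eq_ringHom_ofReal_of_map_mul_conj (σ : ℂ →+* ℂ)
    (hσ : ∀ z : ℂ, σ (z * conj z) = σ z * conj (σ z)) (r : ℝ) :
    ∃ s : ℝ, σ r = s := by
  have h := hσ r
  rw [conj_ofReal, map_mul] at h
  by_cases h0 : σ r = 0
  · exact ⟨0, by simp [h0]⟩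
  · exact ⟨(σ r).re, (conj_eq_iff_re.mp (mul_left_cancel₀ h0 h).symm).symm⟩

def ringHomRestrictReal (σ : ℂ →+* ℂ) (hσ : ∀ r : ℝ, ∃ s : ℝ, σ r = s) : ℝ →+* ℝ where
  toFun r := (σ r).re
  map_one' := by simp
  map_zero' := by simp
  map_mul' x y := by
    obtain ⟨a, ha⟩ := hσ x
    obtain ⟨b, hb⟩ := hσ y
    simp [ha, hb]
  map_add' x y := by
    obtain ⟨a, ha⟩ := hσ x
    obtain ⟨b, hb⟩ := hσ y
    simp [ha, hb]

theorem ringHom_ofReal_eq_self_of_maps_real (σ : ℂ →+* ℂ) (hσ : ∀ r : ℝ, ∃ s : ℝ, σ r = s)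
    (r : ℝ) : σ r = r := by
  have hid : ringHomRestrictReal σ hσ r = r := by
    rw [Subsingleton.elim (ringHomRestrictReal σ hσ) (RingHom.id ℝ)]
    rfl
  obtain ⟨s, hs⟩ := hσ r
  calc σ r = ((σ r).re : ℂ) := by simp [hs]
    _ = r := congrArg _ hid

theorem ringHom_eq_id_or_conj_of_maps_real (σ : ℂ →+* ℂ)
    (hσ : ∀ r : ℝ, ∃ s : ℝ, σ r = s) : σ = RingHom.id ℂ ∨ σ = conj := by
  have hlin : ∀ (c : ℝ) (z : ℂ), σ (c • z) = c • σ z := fun c z => by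
    rw [real_smul, map_mul, ringHom_ofReal_eq_self_of_maps_real σ hσ, real_smul]
  rcases real_algHom_eq_id_or_conj (AlgHom.mk' σ hlin) with h | h
  · exact .inl (RingHom.ext fun z => DFunLike.congr_fun h z)
  · exact .inr (RingHom.ext fun z => DFunLike.congr_fun h z)

end Complex

/-- Let `σ` be a ring automorphism of `ℂ` compatible with the squared
absolute value, i.e. `σ (λ * conj λ) = σ λ * conj (σ λ)` for all `λ`.  Then `σ` maps `ℝ`
into `ℝ`, and consequently `σ` is the identity or complex conjugation. -/
theorem stmt_10 (σ : ℂ ≃+* ℂ)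
    (hσ : ∀ z : ℂ, σ (z * (starRingEnd ℂ) z) = σ z * (starRingEnd ℂ) (σ z)) :
    (∀ r : ℝ, ∃ s : ℝ, σ (r : ℂ) = (s : ℂ)) ∧
    ((∀ z : ℂ, σ z = z) ∨ (∀ z : ℂ, σ z = (starRingEnd ℂ) z)) := by
  have hreal := Complex.exists_ofReal_eq_ringHom_ofReal_of_map_mul_conj σ.toRingHom hσ
  refine ⟨hreal, ?_⟩
  rcases Complex.ringHom_eq_id_or_conj_of_maps_real σ.toRingHom hreal with h | h
  · exact .inl (DFunLike.congr_fun h)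
  · exact .inr (DFunLike.congr_fun h)
end

section
/- Let H be a real normed space and B a continuous symmetric bilinear form on H. Suppose there exists a q-dimensional subspace V of H on which B is positive definite. If (Fᵢ)_{i ∈ I} is a family of subspaces of H that is directed by inclusion (for all i, j there is k with Fᵢ ⊆ F_k and Fⱼ ⊆ F_k) and whose union is dense in H, then there exist an index i ∈ I and a q-dimensional subspace W ⊆ Fᵢ on which B is positive definite. (In other words, the index of a continuous quadratic form can be detected on finitely many points at a time, and hence on any dense directed union of subspaces.) -/
/-!
Positive definiteness of `B` on the span of a tuple `v`, read in the coefficients of `v`, is an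
open condition on `v`: the coefficient vectors of norm one form a compact set, on which
`B (∑ aᵢ vᵢ) (∑ aᵢ vᵢ)` is positive and jointly continuous in `(v, a)`. A basis of `V` satisfies
the condition, so by density some tuple with entries in `⋃ i, F i` does too; directedness puts
all its entries in a single `F k`, and their span is the required `W`.
-/

open Set Filter Topology Metric

lemma pos_of_forall_mem_sphere {X : Type*} [NormedAddCommGroup X] [NormedSpace ℝ X]
    {Q : X → ℝ} (hQ : ∀ (t : ℝ) (x : X), Q (t • x) = t ^ 2 * Q x)
    (h : ∀ x ∈ sphere (0 : X) 1, 0 < Q x) {x : X} (hx : x ≠ 0) : 0 < Q x := by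
  have hnx : ‖x‖ ≠ 0 := norm_ne_zero_iff.mpr hx
  have hu : ‖x‖⁻¹ • x ∈ sphere (0 : X) 1 := by
    rw [mem_sphere_zero_iff_norm, norm_smul, norm_inv, norm_norm, inv_mul_cancel₀ hnx]
  have hQx : Q x = ‖x‖ ^ 2 * Q (‖x‖⁻¹ • x) := by
    rw [← hQ, smul_smul, mul_inv_cancel₀ hnx, one_smul]
  rw [hQx]
  exact mul_pos (by positivity) (h _ hu)

section PosDefFamily

variable {E : Type*} [NormedAddCommGroup E] [NormedSpace ℝ E] {ι : Type*} [Fintype ι]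
  (B : E →L[ℝ] E →L[ℝ] ℝ)

def IsPosDefFamily (v : ι → E) : Prop :=
  ∀ a : ι → ℝ, a ≠ 0 → 0 < B (∑ i, a i • v i) (∑ i, a i • v i)

variable {B}

theorem isPosDefFamily_of_forall_mem_sphere {v : ι → E}
    (h : ∀ a ∈ sphere (0 : ι → ℝ) 1, 0 < B (∑ i, a i • v i) (∑ i, a i • v i)) :
    IsPosDefFamily B v := by
  refine fun a ha => pos_of_forall_mem_sphere (fun t a => ?_) h ha
  simp only [Pi.smul_apply, smul_eq_mul, ← smul_smul, ← Finset.smul_sum, map_smul,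
    smul_apply]
  ring

theorem IsPosDefFamily.linearIndependent {v : ι → E} (hv : IsPosDefFamily B v) :
    LinearIndependent ℝ v := by
  refine Fintype.linearIndependent_iff.mpr fun a ha => ?_
  by_contra! hne
  simpa [ha] using hv a (Function.ne_iff.mpr hne)

theorem IsPosDefFamily.pos_of_mem_span {v : ι → E} (hv : IsPosDefFamily B v) {x : E}
    (hx : x ∈ Submodule.span ℝ (range v)) (hx0 : x ≠ 0) : 0 < B x x := by
  obtain ⟨a, rfl⟩ := (Submodule.mem_span_range_iff_exists_fun ℝ).mp hx
  refine hv a fun ha => hx0 ?_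
  simp [ha]

theorem isOpen_setOf_isPosDefFamily : IsOpen {v : ι → E | IsPosDefFamily B v} := by
  have hcont : Continuous fun p : (ι → E) × (ι → ℝ) =>
      B (∑ i, p.2 i • p.1 i) (∑ i, p.2 i • p.1 i) := by
    fun_prop
  refine isOpen_iff_mem_nhds.mpr fun v hv => ?_
  have hsphere : ∀ᶠ w in 𝓝 v, ∀ a ∈ sphere (0 : ι → ℝ) 1,
      0 < B (∑ i, a i • w i) (∑ i, a i • w i) :=
    (isCompact_sphere 0 1).eventually_forall_of_forall_eventually fun a ha =>
      hcont.continuousAt.eventually (lt_mem_nhds (hv a (ne_zero_of_mem_unit_sphere ⟨a, ha⟩)))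
  exact hsphere.mono fun w hw => isPosDefFamily_of_forall_mem_sphere hw

theorem LinearIndependent.isPosDefFamily {v : ι → E} (hv : LinearIndependent ℝ v)
    {V : Submodule ℝ E} (hvV : ∀ i, v i ∈ V) (hV : ∀ x ∈ V, x ≠ 0 → 0 < B x x) :
    IsPosDefFamily B v := fun a ha =>
  hV _ (Submodule.sum_mem _ fun i _ => V.smul_mem _ (hvV i)) fun h0 =>
    ha (funext (Fintype.linearIndependent_iff.mp hv a h0))

end PosDefFamily

theorem stmt_12_general {H : Type*} [NormedAddCommGroup H] [NormedSpace ℝ H]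
    (B : H →L[ℝ] H →L[ℝ] ℝ)
    (q : ℕ) (hq : 1 ≤ q)
    (V : Submodule ℝ H) (hVdim : Module.finrank ℝ V = q)
    (hVpos : ∀ v ∈ V, v ≠ 0 → 0 < B v v)
    {I : Type*} (F : I → Submodule ℝ H)
    (hdir : ∀ i j : I, ∃ k, F i ≤ F k ∧ F j ≤ F k)
    (hdense : Dense (⋃ i, (F i : Set H))) :
    ∃ i, ∃ W : Submodule ℝ H, W ≤ F i ∧ Module.finrank ℝ W = q ∧
      ∀ w ∈ W, w ≠ 0 → 0 < B w w := by
  have : FiniteDimensional ℝ V := .of_finrank_pos (by omega)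
  let b : Module.Basis (Fin q) ℝ V := Module.finBasisOfFinrankEq ℝ V hVdim
  obtain ⟨w, hw, hwF⟩ : ∃ w ∈ {v : Fin q → H | IsPosDefFamily B v},
      w ∈ pi univ fun _ => ⋃ i, (F i : Set H) :=
    (dense_pi univ fun _ _ => hdense).inter_open_nonempty _ isOpen_setOf_isPosDefFamily
      ⟨_, (b.linearIndependent.map' V.subtype V.ker_subtype).isPosDefFamily
        (fun l => (b l).2) hVpos⟩
  choose j hj using fun l => mem_iUnion.mp (hwF l trivial)
  have : Nonempty I := ⟨j ⟨0, hq⟩⟩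
  obtain ⟨k, hk⟩ := Directed.finite_le hdir j
  refine ⟨k, Submodule.span ℝ (range w), ?_, ?_, fun x hx hx0 => hw.pos_of_mem_span hx hx0⟩
  · rw [Submodule.span_le]
    rintro _ ⟨l, rfl⟩
    exact hk l (hj l)
  · rw [finrank_span_eq_card hw.linearIndependent, Fintype.card_fin]

/-- Let `H` be a real normed space with a continuous symmetric bilinear
form `B`, and suppose `B` is positive definite on some `q`-dimensional subspace `V`.  If
`(Fᵢ)` is a family of subspaces of `H` directed by inclusion whose union is dense in `H`,
then some `Fᵢ` contains a `q`-dimensional subspace `W` on which `B` is positive definite. -/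
theorem stmt_12 {H : Type*} [NormedAddCommGroup H] [NormedSpace ℝ H]
    (B : H →L[ℝ] H →L[ℝ] ℝ) (hBsymm : ∀ x y : H, B x y = B y x)
    (q : ℕ) (hq : 1 ≤ q)
    (V : Submodule ℝ H) (hVdim : Module.finrank ℝ V = q)
    (hVpos : ∀ v ∈ V, v ≠ 0 → 0 < B v v)
    {I : Type*} (F : I → Submodule ℝ H)
    (hdir : ∀ i j : I, ∃ k, F i ≤ F k ∧ F j ≤ F k)
    (hdense : Dense (⋃ i, (F i : Set H))) :
    ∃ i, ∃ W : Submodule ℝ H, W ≤ F i ∧ Module.finrank ℝ W = q ∧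
      ∀ w ∈ W, w ≠ 0 → 0 < B w w :=
  stmt_12_general B q hq V hVdim hVpos F hdir hdense
end
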